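/- arXiv:2506.03480 — 9 statements merged into one kernel-verified Lean document; each statement's English description precedes it below -/
import Mathlib

section
/- Let $I$ be a polymatroidal monomial ideal in the polynomial ring $K[x,y,z]$ in three variables. Then the minimal set of monomial generators of $I$ enjoys the strong exchange property: for any two generators $w_1 = x^a y^b z^c$ and $w_2 = x^{a'} y^{b'} z^{c'}$ with $a > a'$ and $b < b'$, the monomial $x^{a-1} y^{b+1} z^c$ also belongs to $I$. -/
open Finset

/-- A monomial with exponent vector `a` belongs to the `q`-th power of the edge ideal of `G`:
it is divisible by a product of `q` edges of `G`. -/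
def memPow {n : ℕ} (G : SimpleGraph (Fin n)) (q : ℕ) (a : Fin n → ℕ) : Prop :=
  ∃ e : Fin q → Fin n × Fin n, (∀ i, G.Adj (e i).1 (e i).2) ∧
    ∀ j, (∑ i, ((if (e i).1 = j then 1 else 0) + (if (e i).2 = j then 1 else 0))) ≤ a j

/-- The exponent vector `a` is componentwise bounded by `c`. -/
def bdd {n : ℕ} (c a : Fin n → ℕ) : Prop := ∀ i, a i ≤ c i

/-- `δ_c(I(G))`: the largest `q` such that `(I(G)^q)_c ≠ 0`, i.e. such that some
`c`-bounded monomial lies in `I(G)^q`. -/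
noncomputable def deltaC {n : ℕ} (G : SimpleGraph (Fin n)) (c : Fin n → ℕ) : ℕ :=
  sSup {q | ∃ a, bdd c a ∧ memPow G q a}

/-- `W(c,G)`: the minimal monomial generators of `(I(G)^{δ_c(I(G))})_c`, i.e. the
`c`-bounded monomials of `I(G)^{δ_c}` that are minimal with respect to divisibility. -/
def genW {n : ℕ} (G : SimpleGraph (Fin n)) (c : Fin n → ℕ) : Set (Fin n → ℕ) :=
  {a | bdd c a ∧ memPow G (deltaC G c) a ∧
    ∀ b, bdd a b → memPow G (deltaC G c) b → b = a}

/-- The monomial `x_ρ · u / x_ξ`. -/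
def exch {n : ℕ} (u : Fin n → ℕ) (ξ ρ : Fin n) : Fin n → ℕ :=
  fun i => if i = ρ then u i + 1 else if i = ξ then u i - 1 else u i

/-- `W(c,G)` enjoys the strong exchange property. -/
def SEPc {n : ℕ} (G : SimpleGraph (Fin n)) (c : Fin n → ℕ) : Prop :=
  ∀ u ∈ genW G c, ∀ v ∈ genW G c, ∀ ξ ρ : Fin n, v ξ < u ξ → u ρ < v ρ →
    exch u ξ ρ ∈ genW G c

/-- The graph `G` enjoys the strong exchange property: `W(c,G)` does, for every
`c ∈ ℤ_{>0}^n`. -/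
def SEP {n : ℕ} (G : SimpleGraph (Fin n)) : Prop :=
  ∀ c : Fin n → ℕ, (∀ i, 0 < c i) → SEPc G c

/-- The cycle graph on `Fin m`. -/
def cycleG (m : ℕ) : SimpleGraph (Fin m) :=
  SimpleGraph.fromRel (fun i j => (i.val + 1) % m = j.val)

/-- The path graph on `Fin m`. -/
def pathG (m : ℕ) : SimpleGraph (Fin m) :=
  SimpleGraph.fromRel (fun i j => i.val + 1 = j.val)

/-- A set of monomials is of Veronese type: it equals `w · V^{(d)}(a)`, the set of
translates by a fixed monomial `w` of all monomials of degree `d` componentwise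
bounded by `a`. -/
def IsVeronese {n : ℕ} (S : Set (Fin n → ℕ)) : Prop :=
  ∃ (w : Fin n → ℕ) (d : ℕ) (a : Fin n → ℕ), d ≤ ∑ i, a i ∧
    S = {u | ∃ v : Fin n → ℕ, (∀ i, v i ≤ a i) ∧ (∑ i, v i) = d ∧
      u = fun i => w i + v i}

/-- The graph on `Fin m` with edges given by a list of (0-based) pairs. -/
def listGraph (m : ℕ) (E : List (ℕ × ℕ)) : SimpleGraph (Fin m) :=
  SimpleGraph.fromRel (fun i j => (i.val, j.val) ∈ E)

/-- For a polymatroidal monomial ideal in `K[x,y,z]` (given by its minimal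
generators `𝒢`, all of degree `d`, satisfying the exchange property), the generators
enjoy the strong exchange property: for generators `w₁ = x^a y^b z^c`, `w₂ = x^{a'} y^{b'} z^{c'}`
with `a > a'` and `b < b'`, the monomial `x^{a-1} y^{b+1} z^c` belongs to the ideal. -/
theorem stmt0 (𝒢 : Finset (Fin 3 → ℕ)) (d : ℕ) (hne : 𝒢.Nonempty)
    (hdeg : ∀ u ∈ 𝒢, ∑ i, u i = d)
    (hexch : ∀ u ∈ 𝒢, ∀ v ∈ 𝒢, ∀ i, v i < u i →
      ∃ j, u j < v j ∧ exch u i j ∈ 𝒢)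
    (w₁ w₂ : Fin 3 → ℕ) (h1 : w₁ ∈ 𝒢) (h2 : w₂ ∈ 𝒢)
    (ha : w₂ 0 < w₁ 0) (hb : w₁ 1 < w₂ 1) :
    ∃ g ∈ 𝒢, ∀ i, g i ≤ exch w₁ 0 1 i := by
  classical
  set S := 𝒢.filter (fun v' => v' 0 < w₁ 0 ∧ w₁ 1 < v' 1) with hS
  have hSne : S.Nonempty := ⟨w₂, by simp [hS, h2, ha, hb]⟩
  obtain ⟨v, hvS, hvmax⟩ := S.exists_max_image (fun x => x 0) hSne
  rw [hS, Finset.mem_filter] at hvS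
  obtain ⟨hv𝒢, hv0, hv1⟩ := hvS
  obtain ⟨j, hj, hjmem⟩ := hexch w₁ h1 v hv𝒢 0 hv0
  have hj3 : j = 0 ∨ j = 1 ∨ j = 2 := by fin_cases j <;> simp
  rcases hj3 with rfl | rfl | rfl
  · exact absurd hj (by omega)
  · exact ⟨exch w₁ 0 1, hjmem, fun i => le_refl _⟩
  · obtain ⟨j', hj', hj'mem⟩ := hexch v hv𝒢 w₁ h1 2 hj
    have hj3' : j' = 0 ∨ j' = 1 ∨ j' = 2 := by fin_cases j' <;> simp
    rcases hj3' with rfl | rfl | rfl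
    · exfalso
      have hd1 := hdeg w₁ h1
      have hdv := hdeg v hv𝒢
      have hdw := hdeg _ hj'mem
      rw [Fin.sum_univ_three] at hd1 hdv hdw
      have hw0 : exch v 2 0 0 = v 0 + 1 := by simp [exch]
      have hw1 : exch v 2 0 1 = v 1 := by simp [exch]
      have hw2 : exch v 2 0 2 = v 2 - 1 := by simp [exch]
      rw [hw0, hw1, hw2] at hdw
      have hlt : exch v 2 0 0 < w₁ 0 := by rw [hw0]; omega
      have hmemS : exch v 2 0 ∈ S := by
        rw [hS, Finset.mem_filter]
        exact ⟨hj'mem, hlt, by rw [hw1]; omega⟩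
      have := hvmax _ hmemS
      simp only [hw0] at this
      omega
    · exact absurd hj' (by omega)
    · exact absurd hj' (by omega)
end

section
/- Let $C_n$ be the cycle graph on vertices $x_1, \ldots, x_n$ with $n \geq 8$ even, and let $\mathfrak{c} \in \mathbb{Z}_{>0}^n$ be defined by $c_i = 2$ for $i \in \{1,3,7\}$ and $c_i = 1$ otherwise. Then $\delta_{\mathfrak{c}}(I(C_n)) = n/2$, where $\delta_{\mathfrak{c}}(I)$ is the largest $q$ such that $(I^q)_{\mathfrak{c}} \neq 0$. -/
open Finset

lemma parity_adj {n : ℕ} (he : Even n) {u v : Fin n} (h : (cycleG n).Adj u v) :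
    u.val % 2 ≠ v.val % 2 := by
  obtain ⟨k, hk⟩ := he
  rcases h with ⟨hne, h | h⟩ <;>
  · rw [← h, Nat.mod_mod_of_dvd _ (by omega : 2 ∣ n)]
    omega

lemma oddCard (n : ℕ) :
    (Finset.univ.filter (fun j : Fin n => j.val % 2 = 1)).card = n / 2 := by
  have := Nat.card_multiples n 2
  rw [Finset.card_filter, Fin.sum_univ_eq_sum_range (fun i => if i % 2 = 1 then 1 else 0),
    ← Finset.card_filter]
  rw [← this]
  congr 1
  apply Finset.filter_congr
  intro x _
  constructor <;> intro h <;> omega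

/-- For the cycle `C_n` with `n ≥ 8` even and `c` with `c_i = 2` for
`i ∈ {1,3,7}` (1-based) and `c_i = 1` otherwise, `δ_c(I(C_n)) = n/2`. -/
theorem stmt1 (n : ℕ) (hn : 8 ≤ n) (he : Even n) :
    IsGreatest {q | ∃ a, bdd (fun i : Fin n =>
        if i.val = 0 ∨ i.val = 2 ∨ i.val = 6 then 2 else 1) a ∧ memPow (cycleG n) q a}
      (n / 2) := by
  obtain ⟨k, hk⟩ := he
  constructor
  · refine ⟨fun _ => 1, fun i => by dsimp only; split <;> omega, ?_⟩
    have hn2 : ∀ i : Fin (n/2), 2 * i.val + 1 < n := fun i => by have := i.isLt; omega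
    refine ⟨fun i => (⟨2*i.val, by have := hn2 i; omega⟩, ⟨2*i.val+1, hn2 i⟩), ?_, ?_⟩
    · intro i
      refine ⟨by simp [Fin.ext_iff], Or.inl ?_⟩
      exact Nat.mod_eq_of_lt (hn2 i)
    · intro j
      have hjlt := j.isLt
      have hj : j.val / 2 < n / 2 := by omega
      calc (∑ i : Fin (n/2), ((if (⟨2*i.val, by have := hn2 i; omega⟩ : Fin n) = j then 1 else 0)
              + (if (⟨2*i.val+1, hn2 i⟩ : Fin n) = j then 1 else 0)))
          = ∑ i : Fin (n/2), (if i = (⟨j.val/2, hj⟩ : Fin (n/2)) then 1 else 0) := by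
            apply Finset.sum_congr rfl
            intro i _
            simp only [Fin.ext_iff]
            split_ifs <;> omega
        _ ≤ 1 := by rw [Finset.sum_ite_eq' univ]; simp
  · rintro q ⟨a, hb, e, hadj, hsum⟩
    classical
    set O := Finset.univ.filter (fun j : Fin n => j.val % 2 = 1) with hO
    have step : ∀ i : Fin q,
        (∑ j ∈ O, ((if (e i).1 = j then 1 else 0) + (if (e i).2 = j then 1 else 0))) = 1 := by
      intro i
      rw [Finset.sum_add_distrib, Finset.sum_ite_eq O, Finset.sum_ite_eq O]
      have hpar := parity_adj ⟨k, hk⟩ (hadj i)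
      simp only [hO, Finset.mem_filter, Finset.mem_univ, true_and]
      split_ifs with ha hbb hbb <;> omega
    calc q = ∑ _i : Fin q, 1 := by simp
      _ = ∑ i : Fin q, ∑ j ∈ O, ((if (e i).1 = j then 1 else 0) + (if (e i).2 = j then 1 else 0)) := by
          exact Finset.sum_congr rfl fun i _ => (step i).symm
      _ = ∑ j ∈ O, ∑ i : Fin q, ((if (e i).1 = j then 1 else 0) + (if (e i).2 = j then 1 else 0)) :=
          Finset.sum_comm
      _ ≤ ∑ j ∈ O, a j := Finset.sum_le_sum fun j _ => hsum j
      _ ≤ ∑ j ∈ O, 1 := by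
          apply Finset.sum_le_sum
          intro j hj
          refine le_trans (hb j) ?_
          have : j.val % 2 = 1 := by simpa [hO] using hj
          dsimp only
          rw [if_neg (by omega)]
      _ = n / 2 := by rw [Finset.sum_const, smul_eq_mul, mul_one, oddCard]
end

section
/- Let $C_n$ be the cycle graph on vertices $x_1, \ldots, x_n$ with $n \geq 9$ odd, and let $\mathfrak{c} \in \mathbb{Z}_{>0}^n$ be defined by $c_i = 2$ for $i \in \{1,3,7\}$ and $c_i = 1$ otherwise. Then $\delta_{\mathfrak{c}}(I(C_n)) = (n+1)/2$. -/
/-! Vertex `x_{i+1}` is `i : Fin n` below.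

The lower bound is witnessed, for `n = 2m + 1`, by the `m + 1` edges `{x_{2i+1}, x_{2i+2}}`
(`i < m`) and `{x_n, x_1}`: they use `x_1` twice and every other vertex once.

Conversely, a `c`-bounded product of `q` edges has degree `2q ≤ ∑ c_i = n + 3`, and if equality
held every vertex would be saturated. Writing `M_p` for the multiplicity of the edge
`{x_p, x_{p+1}}`, saturation says `M_{p-1} + M_p = c_p`. On the five consecutive vertices
`x_n, x_1, x_2, x_3, x_4`, where `c` reads `1, 2, 1, 2, 1`, this has no solution: the two edges
at `x_1` both touch a vertex with `c = 1`, so each has multiplicity `1`; then `M_2 = 0` at `x_2`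
and `M_3 = 2` at `x_3`, exceeding `c_4 = 1`. Hence `2q < n + 3`, so `q ≤ (n + 1) / 2` as `n` is odd. -/

open Finset

open Function

section Incidence

variable {ι V : Type*} [Fintype ι] [DecidableEq V]

def incidence (e : ι → V × V) (v : V) : ℕ :=
  ∑ i, ((if (e i).1 = v then 1 else 0) + (if (e i).2 = v then 1 else 0))

theorem incidence_eq_card_add_card (e : ι → V × V) (v : V) :
    incidence e v = #{i | (e i).1 = v} + #{i | (e i).2 = v} := by
  simp only [incidence, sum_add_distrib, sum_boole, Nat.cast_id]

theorem sum_incidence [Fintype V] (e : ι → V × V) :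
    ∑ v, incidence e v = 2 * Fintype.card ι := by
  unfold incidence
  rw [sum_comm]
  simp [sum_add_distrib, mul_comm]

theorem incidence_eq_of_sum_le [Fintype V] {e : ι → V × V} {a : V → ℕ}
    (hle : ∀ v, incidence e v ≤ a v) (hsum : ∑ v, a v ≤ 2 * Fintype.card ι) (v : V) :
    incidence e v = a v :=
  (sum_eq_sum_iff_of_le fun v _ => hle v).1
    ((sum_le_sum fun v _ => hle v).antisymm (sum_incidence e ▸ hsum)) v (mem_univ v)

theorem card_filter_eq_le_one {f : ι → V} (hf : Injective f) (v : V) : #{i | f i = v} ≤ 1 :=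
  card_le_one.2 fun _ hi _ hj => hf ((mem_filter.1 hi).2.trans (mem_filter.1 hj).2.symm)

end Incidence

section Cycle

variable {n : ℕ} [NeZero n]

theorem Fin.add_one_eq_iff_val {u v : Fin n} : u + 1 = v ↔ (u.val + 1) % n = v.val := by
  simp only [Fin.ext_iff, Fin.val_add, Fin.val_one', Nat.add_mod_mod]

theorem cycleG_adj {u v : Fin n} : (cycleG n).Adj u v ↔ u ≠ v ∧ (u + 1 = v ∨ v + 1 = u) := by
  simp only [cycleG, SimpleGraph.fromRel_adj, Fin.add_one_eq_iff_val]

theorem exists_incidence_cycleG_eq {ι : Type*} [Fintype ι] {e : ι → Fin n × Fin n}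
    (he : ∀ i, (cycleG n).Adj (e i).1 (e i).2) :
    ∃ M : Fin n → ℕ, ∀ p, incidence e (p + 1) = M (p + 1) + M p := by
  have horient : ∀ i, ∃ u, e i = (u, u + 1) ∨ e i = (u + 1, u) := fun i => by
    rcases (cycleG_adj.1 (he i)).2 with h | h
    · exact ⟨(e i).1, Or.inl (Prod.ext rfl h.symm)⟩
    · exact ⟨(e i).2, Or.inr (Prod.ext h.symm rfl)⟩
  choose g hg using horient
  refine ⟨fun k => ∑ i, if g i = k then 1 else 0, fun p => ?_⟩
  simp only [incidence, ← sum_add_distrib]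
  refine sum_congr rfl fun i _ => ?_
  rcases hg i with h | h <;> simp [h, add_comm]

end Cycle

theorem two_mul_lt_sum_of_memPow_cycleG {n q : ℕ} [NeZero n] {c a : Fin n → ℕ}
    {v₀ v₁ v₂ v₃ v₄ v₅ : Fin n} (h₁ : v₀ + 1 = v₁) (h₂ : v₁ + 1 = v₂) (h₃ : v₂ + 1 = v₃)
    (h₄ : v₃ + 1 = v₄) (h₅ : v₄ + 1 = v₅)
    (hc : c v₁ = 1 ∧ c v₂ = 2 ∧ c v₃ = 1 ∧ c v₄ = 2 ∧ c v₅ = 1)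
    (ha : bdd c a) (hq : memPow (cycleG n) q a) : 2 * q < ∑ v, c v := by
  obtain ⟨e, he, hle⟩ := hq
  by_contra! hsum
  have hsat : ∀ v, incidence e v = c v :=
    incidence_eq_of_sum_le (fun v => (hle v).trans (ha v)) (by rwa [Fintype.card_fin])
  obtain ⟨M, hM⟩ := exists_incidence_cycleG_eq he
  subst h₁ h₂ h₃ h₄ h₅
  have hM₁ := hM v₀
  have hM₂ := hM (v₀ + 1)
  have hM₃ := hM (v₀ + 1 + 1)
  have hM₄ := hM (v₀ + 1 + 1 + 1)
  have hM₅ := hM (v₀ + 1 + 1 + 1 + 1)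
  simp only [hsat, hc] at hM₁ hM₂ hM₃ hM₄ hM₅
  omega

theorem sum_ite_val_zero_two_six_eq {n : ℕ} (hn : 6 < n) :
    ∑ i : Fin n, (if i.val = 0 ∨ i.val = 2 ∨ i.val = 6 then 2 else 1) = n + 3 := by
  obtain ⟨k, rfl⟩ := Nat.exists_eq_add_of_lt hn
  rw [Fin.sum_univ_eq_sum_range (fun i => if i = 0 ∨ i = 2 ∨ i = 6 then 2 else 1),
    show 6 + k + 1 = 7 + k by omega, sum_range_add,
    sum_congr rfl fun x _ => if_neg (show ¬(7 + x = 0 ∨ 7 + x = 2 ∨ 7 + x = 6) by omega),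
    sum_const, card_range, smul_eq_mul, mul_one]
  have : ∑ i ∈ range 7, (if i = 0 ∨ i = 2 ∨ i = 6 then 2 else 1) = 10 := by decide
  omega

theorem memPow_cycleG_two_mul_add_one {m : ℕ} (hm : 1 ≤ m) :
    memPow (cycleG (2 * m + 1)) (m + 1) (fun v => if v.val = 0 then 2 else 1) := by
  let f : Fin (m + 1) → Fin (2 * m + 1) := fun i => ⟨2 * i, by omega⟩
  have hf : Injective f := fun i i' h => Fin.ext (by simpa [f, Fin.ext_iff] using h)
  have hsucc : ∀ i, (f i + 1).val = if i.val = m then 0 else 2 * i.val + 1 := fun i => by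
    rw [Fin.val_add_one]; simp [f, Fin.ext_iff]
  refine ⟨fun i => (f i, f i + 1), fun i => cycleG_adj.2 ⟨fun h => ?_, Or.inl rfl⟩, fun v => ?_⟩
  · have h' : 2 * i.val = if i.val = m then 0 else 2 * i.val + 1 :=
      (congrArg Fin.val h).trans (hsucc i)
    split_ifs at h' <;> omega
  show incidence _ v ≤ if v.val = 0 then 2 else 1
  have h₁ : #{i | f i = v} ≤ 1 := card_filter_eq_le_one hf v
  have h₂ : #{i | f i + 1 = v} ≤ 1 := card_filter_eq_le_one ((add_left_injective 1).comp hf) v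
  rw [incidence_eq_card_add_card]
  dsimp only
  split_ifs with hv
  · omega
  rcases Nat.even_or_odd v.val with ⟨t, ht⟩ | ⟨t, ht⟩
  · suffices #{i | f i + 1 = v} = 0 by omega
    refine card_eq_zero.2 (filter_eq_empty_iff.2 fun i _ h => ?_)
    have h' : (if i.val = m then 0 else 2 * i.val + 1) = v.val :=
      (hsucc i).symm.trans (congrArg Fin.val h)
    split_ifs at h' <;> omega
  · suffices #{i | f i = v} = 0 by omega
    refine card_eq_zero.2 (filter_eq_empty_iff.2 fun i _ h => ?_)
    have : 2 * i.val = v.val := congrArg Fin.val h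
    omega

/-- For the cycle `C_n` with `n ≥ 9` odd and `c` with `c_i = 2` for
`i ∈ {1,3,7}` (1-based) and `c_i = 1` otherwise, `δ_c(I(C_n)) = (n+1)/2`. -/
theorem stmt2 (n : ℕ) (hn : 9 ≤ n) (ho : Odd n) :
    IsGreatest {q | ∃ a, bdd (fun i : Fin n =>
        if i.val = 0 ∨ i.val = 2 ∨ i.val = 6 then 2 else 1) a ∧ memPow (cycleG n) q a}
      ((n + 1) / 2) := by
  obtain ⟨m, rfl⟩ := ho
  refine ⟨⟨_, fun v => ?_, (show (2 * m + 1 + 1) / 2 = m + 1 by omega) ▸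
    memPow_cycleG_two_mul_add_one (by omega)⟩, fun q ⟨a, ha, hq⟩ => ?_⟩
  · dsimp only; split_ifs <;> omega
  have hadd_one : ∀ k j (hk : k < 2 * m + 1) (hj : j < 2 * m + 1),
      k + 1 < 2 * m + 1 ∧ k + 1 = j ∨ k + 1 = 2 * m + 1 ∧ j = 0 →
        (⟨k, hk⟩ : Fin _) + 1 = ⟨j, hj⟩ := by
    rintro k j - - (⟨hlt, rfl⟩ | ⟨heq, rfl⟩)
    exacts [Fin.add_one_eq_iff_val.2 (Nat.mod_eq_of_lt hlt),
      Fin.add_one_eq_iff_val.2 (by rw [heq, Nat.mod_self])]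
  have := two_mul_lt_sum_of_memPow_cycleG (v₀ := ⟨2 * m - 1, by omega⟩) (v₁ := ⟨2 * m, by omega⟩)
    (v₂ := ⟨0, by omega⟩) (v₃ := ⟨1, by omega⟩) (v₄ := ⟨2, by omega⟩) (v₅ := ⟨3, by omega⟩)
    (hadd_one _ _ _ _ (by omega)) (hadd_one _ _ _ _ (by omega)) (hadd_one _ _ _ _ (by omega))
    (hadd_one _ _ _ _ (by omega)) (hadd_one _ _ _ _ (by omega))
    ⟨if_neg (show ¬(2 * m = 0 ∨ 2 * m = 2 ∨ 2 * m = 6) by omega), rfl, rfl, rfl, rfl⟩ ha hq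
  rw [sum_ite_val_zero_two_six_eq (by omega)] at this
  omega
end

section
/- Let $P_n$ be the path graph on vertices $x_1, \ldots, x_n$ with $n \geq 7$, and let $\mathfrak{c} \in \mathbb{Z}_{>0}^n$ be defined by $c_i = 2$ for $i \in \{3,7\}$ and $c_i = 1$ otherwise. Then $\delta_{\mathfrak{c}}(I(P_n)) = \lfloor n/2 \rfloor$. -/
open Finset

lemma indicator_sum_le (m k : ℕ) : (∑ i : Fin m, if (i : ℕ) = k then 1 else 0) ≤ 1 := by
  rcases Nat.lt_or_ge k m with h | h
  · have he : ∀ i : Fin m, ((i : ℕ) = k) ↔ (i = ⟨k, h⟩) := fun i => by simp [Fin.ext_iff]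
    simp only [he]
    rw [Finset.sum_ite_eq' Finset.univ (⟨k, h⟩ : Fin m) (fun _ => 1)]
    simp
  · have he : ∀ i : Fin m, ¬((i : ℕ) = k) := fun i => by have := i.isLt; omega
    simp [he]

lemma card_odd (n : ℕ) :
    ((Finset.univ : Finset (Fin n)).filter (fun j : Fin n => j.val % 2 = 1)).card = n / 2 := by
  have h : ((Finset.range n).filter (fun k => k % 2 = 1)).card = n / 2 := by
    induction n with
    | zero => simp
    | succ m ih =>
      rw [Finset.range_add_one, Finset.filter_insert]
      split_ifs with h
      · rw [Finset.card_insert_of_notMem (by simp)]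
        omega
      · omega
  rw [← h]
  apply Finset.card_bij (fun (j : Fin n) _ => j.val)
  · intro j hj
    simp only [Finset.mem_filter, Finset.mem_univ, true_and] at hj
    simp only [Finset.mem_filter, Finset.mem_range]
    exact ⟨j.isLt, hj⟩
  · intro j1 _ j2 _ hv; exact Fin.ext hv
  · intro k hk
    simp only [Finset.mem_filter, Finset.mem_range] at hk
    exact ⟨⟨k, hk.1⟩, by simp [hk.2], rfl⟩

/-- For the path `P_n` with `n ≥ 7` and `c` with `c_i = 2` for `i ∈ {3,7}`
(1-based) and `c_i = 1` otherwise, `δ_c(I(P_n)) = ⌊n/2⌋`. -/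
theorem stmt3 (n : ℕ) (hn : 7 ≤ n) :
    IsGreatest {q | ∃ a, bdd (fun i : Fin n =>
        if i.val = 2 ∨ i.val = 6 then 2 else 1) a ∧ memPow (pathG n) q a}
      (n / 2) := by
  constructor
  · -- membership: the matching (2i, 2i+1) for i < n/2
    refine ⟨fun _ => 1, fun i => ?_, ?_⟩
    · dsimp only; split <;> omega
    · have hlt : ∀ i : Fin (n / 2), 2 * (i : ℕ) + 1 < n := by
        intro i; have := i.isLt; omega
      refine ⟨fun i => (⟨2 * (i : ℕ), by have := hlt i; omega⟩, ⟨2 * (i : ℕ) + 1, hlt i⟩),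
        ?_, ?_⟩
      · intro i
        simp [pathG, SimpleGraph.fromRel_adj, Fin.ext_iff]
      · intro j
        calc (∑ i : Fin (n / 2),
              ((if (⟨2 * (i : ℕ), by have := hlt i; omega⟩ : Fin n) = j then 1 else 0) +
               (if (⟨2 * (i : ℕ) + 1, hlt i⟩ : Fin n) = j then 1 else 0)))
            ≤ ∑ i : Fin (n / 2), (if (i : ℕ) = (j : ℕ) / 2 then 1 else 0) := by
              apply Finset.sum_le_sum
              intro i _
              have hi := i.isLt
              simp only [Fin.ext_iff]
              split_ifs <;> omega
          _ ≤ 1 := indicator_sum_le _ _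
  · -- upper bound
    rintro q ⟨a, hbdd, e, hadj, hsum⟩
    classical
    set O := (Finset.univ : Finset (Fin n)).filter (fun j : Fin n => j.val % 2 = 1) with hO
    have hpar : ∀ i : Fin q, ((e i).1.val % 2 = 1) ↔ ¬ ((e i).2.val % 2 = 1) := by
      intro i
      have h := hadj i
      simp only [pathG, SimpleGraph.fromRel_adj, Fin.ext_iff] at h
      omega
    have key : ∀ i : Fin q,
        (∑ j ∈ O, ((if (e i).1 = j then 1 else 0) + (if (e i).2 = j then 1 else 0))) = 1 := by
      intro i
      rw [Finset.sum_add_distrib, Finset.sum_ite_eq O (e i).1 (fun _ => 1),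
        Finset.sum_ite_eq O (e i).2 (fun _ => 1)]
      have h1 : (e i).1 ∈ O ↔ (e i).1.val % 2 = 1 := by simp [hO]
      have h2 : (e i).2 ∈ O ↔ (e i).2.val % 2 = 1 := by simp [hO]
      have := hpar i
      split_ifs with ha hb hb <;> rw [h1] at ha <;> rw [h2] at hb <;> tauto
    have habdd : ∀ j ∈ O, a j ≤ 1 := by
      intro j hj
      simp only [hO, Finset.mem_filter] at hj
      have hb := hbdd j
      dsimp only at hb
      split_ifs at hb with h
      · omega
      · exact hb
    calc q = ∑ _i : Fin q, 1 := by simp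
      _ = ∑ i : Fin q, ∑ j ∈ O,
            ((if (e i).1 = j then 1 else 0) + (if (e i).2 = j then 1 else 0)) := by
          apply Finset.sum_congr rfl
          intro i _
          exact (key i).symm
      _ = ∑ j ∈ O, ∑ i : Fin q,
            ((if (e i).1 = j then 1 else 0) + (if (e i).2 = j then 1 else 0)) :=
          Finset.sum_comm
      _ ≤ ∑ j ∈ O, a j := Finset.sum_le_sum (fun j _ => hsum j)
      _ ≤ ∑ _j ∈ O, 1 := Finset.sum_le_sum habdd
      _ = O.card := by simp
      _ = n / 2 := card_odd n
end

section
/- The cycle $C_n$ with $n \geq 8$ does not enjoy the strong exchange property: there exists $\mathfrak{c} \in \mathbb{Z}_{>0}^n$ (namely $c_i = 2$ for $i \in \{1,3,7\}$, $c_i = 1$ otherwise) and two minimal monomial generators $w_1, w_2$ of $(I(C_n)^{\delta_{\mathfrak{c}}(I(C_n))})_{\mathfrak{c}}$ and indices $\xi, \rho$ with $\deg_{x_\xi}(w_1) > \deg_{x_\xi}(w_2)$ and $\deg_{x_\rho}(w_1) < \deg_{x_\rho}(w_2)$ such that $x_\rho w_1 / x_\xi$ is not a minimal monomial generator of $(I(C_n)^{\delta_{\mathfrak{c}}(I(C_n))})_{\mathfrak{c}}$.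 -/
open Finset

/-!
`δ_𝔠` and `W(𝔠, G)` are pinned down by weak LP duality. A product of `q` edges has degree `2q`,
and if `y / 2` is a fractional vertex cover then every monomial `a ∈ I(G)^q` has
`2q ≤ ∑ yᵢ aᵢ`. So a `𝔠`-bounded product of `q` edges together with a cover weight `y` with
`∑ yᵢ cᵢ < 2(q + 1)` forces `δ_𝔠 = q`, and every `𝔠`-bounded product of `q` edges is then a
minimal generator, since it has the least degree possible. For `C_n` the two generators are
explicit products of edges (`δ = ⌈n/2⌉`), and `x₂ w₁ / x₄` lies outside `I^δ` because a cover
weight vanishing at the two vertices where it has exponent `2` gives it weight below `2δ`.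
-/

section EdgeIdealPowers

variable {n : ℕ}

def edgeVec (u v : Fin n) : Fin n → ℕ :=
  fun j => (if u = j then 1 else 0) + (if v = j then 1 else 0)

theorem sum_mul_edgeVec (y : Fin n → ℕ) (u v : Fin n) :
    ∑ j, y j * edgeVec u v j = y u + y v := by
  simp [edgeVec, mul_add, Finset.sum_add_distrib]

theorem sum_edgeVec (u v : Fin n) : ∑ j, edgeVec u v j = 2 := by
  simp [edgeVec, sum_add_distrib]

def IsEdgeSum (G : SimpleGraph (Fin n)) (q : ℕ) (a : Fin n → ℕ) : Prop :=
  ∃ e : Fin q → Fin n × Fin n, (∀ i, G.Adj (e i).1 (e i).2) ∧ ∑ i, edgeVec (e i).1 (e i).2 = a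

/-- `y / 2` is a fractional vertex cover of `G`. -/
def IsCoverWeight (G : SimpleGraph (Fin n)) (y : Fin n → ℕ) : Prop :=
  ∀ u v, G.Adj u v → 2 ≤ y u + y v

variable {G : SimpleGraph (Fin n)} {p q : ℕ} {a b c : Fin n → ℕ}

theorem isEdgeSum_zero : IsEdgeSum G 0 0 :=
  ⟨Fin.elim0, fun i => i.elim0, by simp⟩

theorem isEdgeSum_edgeVec {u v : Fin n} (h : G.Adj u v) : IsEdgeSum G 1 (edgeVec u v) :=
  ⟨fun _ => (u, v), fun _ => h, by simp⟩

theorem IsEdgeSum.add (ha : IsEdgeSum G p a) (hb : IsEdgeSum G q b) :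
    IsEdgeSum G (p + q) (a + b) := by
  obtain ⟨e, he, rfl⟩ := ha
  obtain ⟨f, hf, rfl⟩ := hb
  refine ⟨Fin.append e f, fun i => ?_, by simp [Fin.sum_univ_add]⟩
  induction i using Fin.addCases <;> simp [he, hf]

theorem IsEdgeSum.sum_eq (h : IsEdgeSum G q a) : ∑ j, a j = 2 * q := by
  obtain ⟨e, -, rfl⟩ := h
  simp only [Finset.sum_apply]
  rw [sum_comm]
  simp [sum_edgeVec, mul_comm]

theorem IsEdgeSum.memPow (h : IsEdgeSum G q a) : memPow G q a := by
  obtain ⟨e, he, rfl⟩ := h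
  exact ⟨e, he, fun j => by simp [Finset.sum_apply, edgeVec]⟩

theorem IsCoverWeight.two_mul_le_sum_mul {y : Fin n → ℕ} (hy : IsCoverWeight G y)
    (h : memPow G q a) : 2 * q ≤ ∑ j, y j * a j := by
  obtain ⟨e, he, hle⟩ := h
  calc 2 * q = ∑ _i : Fin q, 2 := by simp [mul_comm]
    _ ≤ ∑ i, (y (e i).1 + y (e i).2) := sum_le_sum fun i _ => hy _ _ (he i)
    _ = ∑ j, y j * ∑ i, edgeVec (e i).1 (e i).2 j := by
        simp only [← sum_mul_edgeVec, Finset.mul_sum]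
        exact Finset.sum_comm
    _ ≤ ∑ j, y j * a j := sum_le_sum fun j _ => Nat.mul_le_mul_left _ (hle j)

theorem deltaC_eq_of_cover (y : Fin n → ℕ) (hy : IsCoverWeight G y)
    (hyc : ∑ j, y j * c j < 2 * (q + 1)) (hc : bdd c a) (ha : memPow G q a) :
    deltaC G c = q := by
  refine IsGreatest.csSup_eq ⟨⟨a, hc, ha⟩, ?_⟩
  rintro p ⟨b, hb, hbp⟩
  have hp := hy.two_mul_le_sum_mul hbp
  have hyb : ∑ j, y j * b j ≤ ∑ j, y j * c j := sum_le_sum fun j _ => Nat.mul_le_mul_left _ (hb j)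
  omega

theorem IsEdgeSum.mem_genW (h : IsEdgeSum G (deltaC G c) a) (hc : bdd c a) : a ∈ genW G c := by
  refine ⟨hc, h.memPow, fun b hb hbm => ?_⟩
  have hle : ∀ j ∈ univ, b j ≤ a j := fun j _ => hb j
  have hsum : ∑ j, b j = ∑ j, a j := by
    have := IsCoverWeight.two_mul_le_sum_mul (y := 1) (fun _ _ _ => le_rfl) hbm
    simp only [Pi.one_apply, one_mul] at this
    exact le_antisymm (sum_le_sum hle) (h.sum_eq ▸ this)
  funext j
  exact (sum_eq_sum_iff_of_le hle).mp hsum j (mem_univ j)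

theorem notMem_genW_of_cover (y : Fin n → ℕ) (hy : IsCoverWeight G y)
    (hya : ∑ j, y j * a j < 2 * deltaC G c) : a ∉ genW G c := fun ha =>
  absurd (hy.two_mul_le_sum_mul ha.2.1) (not_le.mpr hya)

theorem not_SEPc_of_cover {w₁ w₂ : Fin n → ℕ} (y z : Fin n → ℕ) (ξ ρ : Fin n)
    (hy : IsCoverWeight G y) (hyc : ∑ j, y j * c j < 2 * (q + 1))
    (hz : IsCoverWeight G z) (hz_exch : ∑ j, z j * exch w₁ ξ ρ j < 2 * q)
    (h₁ : IsEdgeSum G q w₁) (h₂ : IsEdgeSum G q w₂) (hc₁ : bdd c w₁) (hc₂ : bdd c w₂)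
    (hξ : w₂ ξ < w₁ ξ) (hρ : w₁ ρ < w₂ ρ) : ¬ SEPc G c := by
  obtain rfl := deltaC_eq_of_cover y hy hyc hc₁ h₁.memPow
  exact fun hsep => notMem_genW_of_cover z hz hz_exch
    (hsep w₁ (h₁.mem_genW hc₁) w₂ (h₂.mem_genW hc₂) ξ ρ hξ hρ)

end EdgeIdealPowers

section Cycle

variable {n : ℕ}

theorem cycleG_adj_succ (k : ℕ) (h : k + 1 < n) : (cycleG n).Adj ⟨k, by omega⟩ ⟨k + 1, h⟩ := by
  simp [cycleG, Nat.mod_eq_of_lt h]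

theorem cycleG_adj_last_zero (h : 2 ≤ n) : (cycleG n).Adj ⟨n - 1, by omega⟩ ⟨0, by omega⟩ := by
  simp [cycleG, Fin.ext_iff, Nat.sub_add_cancel (by omega : 1 ≤ n)]
  omega

theorem isCoverWeight_cycleG {y : Fin n → ℕ}
    (hsucc : ∀ k (h : k + 1 < n), 2 ≤ y ⟨k, by omega⟩ + y ⟨k + 1, h⟩)
    (hlast : ∀ h : 0 < n, 2 ≤ y ⟨n - 1, by omega⟩ + y ⟨0, h⟩) :
    IsCoverWeight (cycleG n) y := by
  have hstep : ∀ u v : Fin n, (u.val + 1) % n = v.val → 2 ≤ y u + y v := by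
    rintro ⟨u, hu⟩ ⟨v, hv⟩ huv
    rcases Nat.lt_or_ge (u + 1) n with hlt | hge
    · obtain rfl : v = u + 1 := by simpa [Nat.mod_eq_of_lt hlt] using huv.symm
      exact hsucc u hlt
    · obtain rfl : u = n - 1 := by omega
      obtain rfl : v = 0 := by simpa [Nat.sub_add_cancel (by omega : 1 ≤ n)] using huv.symm
      exact hlast hv
  intro u v huv
  rcases ((SimpleGraph.fromRel_adj _ _ _).mp huv).2 with h | h
  · exact hstep u v h
  · exact add_comm (y u) _ ▸ hstep v u h

def intervalVec (a b : ℕ) : Fin n → ℕ := fun j => if a ≤ j.val ∧ j.val < b then 1 else 0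

theorem isEdgeSum_cycleG_intervalVec (a R : ℕ) (h : a + 2 * R ≤ n) :
    IsEdgeSum (cycleG n) R (intervalVec a (a + 2 * R)) := by
  induction R with
  | zero =>
    convert isEdgeSum_zero using 1
    funext j
    simp [intervalVec]
  | succ R ih =>
    convert (ih (by omega)).add (isEdgeSum_edgeVec (cycleG_adj_succ (a + 2 * R) (by omega))) using 1
    funext j
    simp only [intervalVec, edgeVec, Pi.add_apply, Fin.ext_iff]
    split_ifs <;> omega

theorem sum_fin_eq_of_eq_one {f : Fin n → ℕ} (g : ℕ → ℕ) (hfg : ∀ j : Fin n, f j = g j) (B : ℕ)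
    (hB : B < n) (hg : ∀ k, B ≤ k → k + 1 < n → g k = 1) :
    ∑ j, f j = ∑ k ∈ range B, g k + (n - 1 - B) + g (n - 1) := by
  rw [sum_congr rfl fun j _ => hfg j, Fin.sum_univ_eq_sum_range g n]
  conv_lhs => rw [show n = B + ((n - 1 - B) + 1) by omega]
  rw [sum_range_add, sum_range_succ, sum_congr rfl fun i hi => hg (B + i) (by omega)
    (by simp at hi; omega), sum_const, card_range, smul_eq_mul, mul_one,
    show B + (n - 1 - B) = n - 1 by omega, add_assoc]

end Cycle

section CycleCounterexample

variable {n : ℕ}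

/-- The bound `𝔠` of the theorem, indexed from `0`. -/
def cycleBound (k : ℕ) : ℕ := if k = 0 ∨ k = 2 ∨ k = 6 then 2 else 1

/-- Twice a fractional vertex cover of the cycle vanishing at `0` and `2`, the two vertices where
the exchanged monomial `x₂ w₁ / x₄` has exponent `2`. -/
def cycleCover (n k : ℕ) : ℕ :=
  if k = 0 ∨ k = 2 then 0 else if k = 1 ∨ k = 3 ∨ k = n - 1 then 2 else 1

theorem isCoverWeight_cycleCover (hn : 5 ≤ n) :
    IsCoverWeight (cycleG n) fun j => cycleCover n j :=
  isCoverWeight_cycleG (fun _ _ => by simp only [cycleCover]; grind)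
    (fun _ => by simp only [cycleCover]; grind)

theorem not_SEPc_cycleG_of_odd (hn : 9 ≤ n) (hodd : n % 2 = 1) :
    ¬ SEPc (cycleG n) fun i => cycleBound i := by
  refine not_SEPc_of_cover (q := (n + 1) / 2)
    (w₁ := fun j => if j.val = 0 then 2 else 1)
    (w₂ := fun j => if j.val = 2 ∨ j.val = 6 then 2 else if j.val = 4 then 0 else 1)
    (fun j => cycleCover n j) (fun j => cycleCover n j) ⟨4, by omega⟩ ⟨2, by omega⟩
    (isCoverWeight_cycleCover (by omega)) ?_ (isCoverWeight_cycleCover (by omega)) ?_ ?_ ?_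
    (fun _ => by simp only [cycleBound]; grind) (fun _ => by simp only [cycleBound]; grind)
    (by simp) (by simp)
  · rw [sum_fin_eq_of_eq_one (fun k => cycleCover n k * cycleBound k) (fun _ => rfl) 7 (by omega)
      (fun _ _ _ => by simp only [cycleCover, cycleBound]; grind)]
    simp only [sum_range_succ, sum_range_zero, cycleCover, cycleBound]
    grind
  · rw [sum_fin_eq_of_eq_one
      (fun k => cycleCover n k * if k = 0 ∨ k = 2 then 2 else if k = 4 then 0 else 1)
      (fun _ => by simp only [exch, Fin.ext_iff]; grind) 7 (by omega)
      (fun _ _ _ => by simp only [cycleCover]; grind)]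
    simp only [sum_range_succ, sum_range_zero, cycleCover]
    grind
  · convert (isEdgeSum_edgeVec (cycleG_adj_last_zero (n := n) (by omega))).add
      ((isEdgeSum_cycleG_intervalVec 0 1 (by omega)).add
      (isEdgeSum_cycleG_intervalVec 2 ((n - 3) / 2) (by omega))) using 1
    · omega
    · funext j
      simp only [intervalVec, edgeVec, Pi.add_apply, Fin.ext_iff]
      grind
  · convert ((((isEdgeSum_cycleG_intervalVec 1 1 (by omega)).add
      (isEdgeSum_cycleG_intervalVec 2 1 (by omega))).add
      (isEdgeSum_cycleG_intervalVec 5 1 (by omega))).add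
      (isEdgeSum_cycleG_intervalVec 6 1 (by omega))).add
      ((isEdgeSum_edgeVec (cycleG_adj_last_zero (n := n) (by omega))).add
      (isEdgeSum_cycleG_intervalVec 8 ((n - 9) / 2) (by omega))) using 1
    · omega
    · funext j
      simp only [intervalVec, edgeVec, Pi.add_apply, Fin.ext_iff]
      grind

theorem sum_range_two_mul_ite_odd (m : ℕ) :
    ∑ k ∈ range (2 * m), (if k % 2 = 1 then 2 else 0) = 2 * m := by
  induction m with
  | zero => simp
  | succ m ih =>
    rw [show 2 * (m + 1) = 2 * m + 1 + 1 by ring, sum_range_succ, sum_range_succ, ih]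
    grind

theorem not_SEPc_cycleG_of_even (hn : 8 ≤ n) (heven : n % 2 = 0) :
    ¬ SEPc (cycleG n) fun i => cycleBound i := by
  refine not_SEPc_of_cover (q := n / 2)
    (w₁ := fun j => if j.val = 0 then 2 else if j.val = 6 then 0 else 1)
    (w₂ := fun j => if j.val = 2 then 2 else if j.val = 4 then 0 else 1)
    (fun j => if j.val % 2 = 1 then 2 else 0) (fun j => cycleCover n j) ⟨4, by omega⟩ ⟨2, by omega⟩
    ?_ ?_ (isCoverWeight_cycleCover (by omega)) ?_ ?_ ?_
    (fun _ => by simp only [cycleBound]; grind) (fun _ => by simp only [cycleBound]; grind)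
    (by simp) (by simp)
  · exact isCoverWeight_cycleG (fun _ _ => by grind) (fun _ => by grind)
  · calc ∑ j : Fin n, (if j.val % 2 = 1 then 2 else 0) * cycleBound j
        = ∑ k ∈ range n, (if k % 2 = 1 then 2 else 0) := by
          rw [← Fin.sum_univ_eq_sum_range]
          exact sum_congr rfl fun _ _ => by simp only [cycleBound]; grind
      _ = n := by rw [← Nat.two_mul_div_two_of_even (Nat.even_iff.mpr heven),
            sum_range_two_mul_ite_odd]
      _ < 2 * (n / 2 + 1) := by omega
  · rw [sum_fin_eq_of_eq_one
      (fun k => cycleCover n k * if k = 0 ∨ k = 2 then 2 else if k = 4 ∨ k = 6 then 0 else 1)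
      (fun _ => by simp only [exch, Fin.ext_iff]; grind) 7 (by omega)
      (fun _ _ _ => by simp only [cycleCover]; grind)]
    simp only [sum_range_succ, sum_range_zero, cycleCover]
    grind
  · convert ((isEdgeSum_edgeVec (cycleG_adj_last_zero (n := n) (by omega))).add
      (isEdgeSum_cycleG_intervalVec 0 3 (by omega))).add
      (isEdgeSum_cycleG_intervalVec 7 ((n - 8) / 2) (by omega)) using 1
    · omega
    · funext j
      simp only [intervalVec, edgeVec, Pi.add_apply, Fin.ext_iff]
      grind
  · convert (((isEdgeSum_cycleG_intervalVec 1 1 (by omega)).add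
      (isEdgeSum_cycleG_intervalVec 2 1 (by omega))).add
      (isEdgeSum_edgeVec (cycleG_adj_last_zero (n := n) (by omega)))).add
      (isEdgeSum_cycleG_intervalVec 5 ((n - 6) / 2) (by omega)) using 1
    · omega
    · funext j
      simp only [intervalVec, edgeVec, Pi.add_apply, Fin.ext_iff]
      grind

end CycleCounterexample

/-- The cycle `C_n` with `n ≥ 8` does not enjoy the strong exchange property:
for `c` with `c_i = 2` for `i ∈ {1,3,7}` (1-based) and `c_i = 1` otherwise, there are
`w₁, w₂ ∈ W(c,C_n)` and indices `ξ, ρ` with `deg_{x_ξ} w₁ > deg_{x_ξ} w₂`,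
`deg_{x_ρ} w₁ < deg_{x_ρ} w₂` but `x_ρ w₁ / x_ξ ∉ W(c,C_n)`. -/
theorem stmt4 (n : ℕ) (hn : 8 ≤ n) :
    ∃ w₁ ∈ genW (cycleG n)
        (fun i : Fin n => if i.val = 0 ∨ i.val = 2 ∨ i.val = 6 then 2 else 1),
      ∃ w₂ ∈ genW (cycleG n)
        (fun i : Fin n => if i.val = 0 ∨ i.val = 2 ∨ i.val = 6 then 2 else 1),
      ∃ ξ ρ : Fin n, w₂ ξ < w₁ ξ ∧ w₁ ρ < w₂ ρ ∧
        exch w₁ ξ ρ ∉ genW (cycleG n)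
          (fun i : Fin n => if i.val = 0 ∨ i.val = 2 ∨ i.val = 6 then 2 else 1) := by
  have h : ¬ SEPc (cycleG n) fun i => cycleBound i := by
    rcases Nat.mod_two_eq_zero_or_one n with heven | hodd
    · exact not_SEPc_cycleG_of_even hn heven
    · exact not_SEPc_cycleG_of_odd (by omega) hodd
  unfold SEPc at h
  push Not at h
  exact h
end

section
/- Let $G$ be the graph on vertices $x_1,\ldots,x_6$ with edges $\{x_1,x_2\}, \{x_1,x_3\}, \{x_2,x_3\}, \{x_3,x_4\}, \{x_4,x_5\}, \{x_4,x_6\}$, and let $\mathfrak{c} = (1,1,1,1,1,1)$. Then $\delta_{\mathfrak{c}}(I(G)) = 2$, the monomials $x_1x_3x_4x_5$ and $x_2x_3x_4x_6$ are minimal monomial generators of $(I(G)^2)_{\mathfrak{c}}$, but $x_3x_4x_5x_6$ is not in $(I(G)^2)_{\mathfrak{c}}$; hence $\mathcal{W}(\mathfrak{c},G)$ does not enjoy the strong exchange property. -/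
/-!
Every edge monomial has degree 2, so a monomial of degree `2q` lying in `I(G)^q` has no proper
divisor in `I(G)^q`; this makes `x₁x₃x₄x₅` and `x₂x₃x₄x₆` minimal generators once `δ = 2`.
That `δ < 3` (the leaves `x₅`, `x₆` share their only neighbour `x₄`) and that `x₃x₄x₅x₆` is
not a product of two edges are finite checks over the triples and pairs of edges of `G`.
-/

open Finset

/-- The graph of Example `Ex_triangle`. -/
def G6 : SimpleGraph (Fin 6) := listGraph 6 [(0,1),(0,2),(1,2),(2,3),(3,4),(3,5)]

instance : DecidableRel G6.Adj := fun a b =>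
  inferInstanceAs <| Decidable <| (SimpleGraph.fromRel fun i j : Fin 6 =>
    (i.val, j.val) ∈ [(0,1),(0,2),(1,2),(2,3),(3,4),(3,5)]).Adj a b

def edgeExponent {n : ℕ} (p : Fin n × Fin n) (j : Fin n) : ℕ :=
  (if p.1 = j then 1 else 0) + (if p.2 = j then 1 else 0)

lemma sum_edgeExponent {n : ℕ} (p : Fin n × Fin n) : ∑ j, edgeExponent p j = 2 := by
  simp [edgeExponent, Finset.sum_add_distrib]

lemma memPow_iff {n q : ℕ} {G : SimpleGraph (Fin n)} {a : Fin n → ℕ} :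
    memPow G q a ↔ ∃ e : Fin q → Fin n × Fin n, (∀ i, G.Adj (e i).1 (e i).2) ∧
      ∀ j, ∑ i, edgeExponent (e i) j ≤ a j :=
  Iff.rfl

namespace memPow

variable {n q : ℕ} {G : SimpleGraph (Fin n)} {a b : Fin n → ℕ}

lemma mono (h : ∀ i, a i ≤ b i) : memPow G q a → memPow G q b :=
  fun ⟨e, hadj, hle⟩ => ⟨e, hadj, fun j => (hle j).trans (h j)⟩

lemma of_succ : memPow G (q + 1) a → memPow G q a := by
  rintro ⟨e, hadj, hle⟩
  refine ⟨fun i => e i.castSucc, fun i => hadj _, fun j => le_trans ?_ (hle j)⟩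
  rw [Fin.sum_univ_castSucc]
  exact Nat.le_add_right _ _

lemma of_le {q' : ℕ} (h : q ≤ q') (hm : memPow G q' a) : memPow G q a := by
  induction h with
  | refl => exact hm
  | step _ ih => exact ih hm.of_succ

lemma two_mul_le_sum : memPow G q a → 2 * q ≤ ∑ j, a j := by
  rintro ⟨e, -, hle⟩
  calc 2 * q = ∑ i, ∑ j, edgeExponent (e i) j := by simp [sum_edgeExponent, mul_comm]
    _ = ∑ j, ∑ i, edgeExponent (e i) j := Finset.sum_comm
    _ ≤ ∑ j, a j := Finset.sum_le_sum fun j _ => hle j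

lemma eq_of_le_of_sum_eq (hs : ∑ j, b j = 2 * q) (hle : ∀ j, a j ≤ b j)
    (hm : memPow G q a) : a = b := by
  have hsum : ∑ j, a j = ∑ j, b j :=
    le_antisymm (Finset.sum_le_sum fun j _ => hle j) (hs ▸ hm.two_mul_le_sum)
  funext j
  exact (Finset.sum_eq_sum_iff_of_le fun j _ => hle j).1 hsum j (Finset.mem_univ j)

end memPow

lemma memPow_two_iff {n : ℕ} {G : SimpleGraph (Fin n)} {a : Fin n → ℕ} :
    memPow G 2 a ↔ ∃ p r : Fin n × Fin n, G.Adj p.1 p.2 ∧ G.Adj r.1 r.2 ∧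
      ∀ j, edgeExponent p j + edgeExponent r j ≤ a j := by
  rw [memPow_iff]
  constructor
  · rintro ⟨e, hadj, hle⟩
    exact ⟨e 0, e 1, hadj 0, hadj 1, fun j => by simpa only [Fin.sum_univ_two] using hle j⟩
  · rintro ⟨p, r, hp, hr, hle⟩
    refine ⟨![p, r], fun i => by fin_cases i <;> assumption, fun j => ?_⟩
    simpa [Fin.sum_univ_two] using hle j

lemma memPow_three_iff {n : ℕ} {G : SimpleGraph (Fin n)} {a : Fin n → ℕ} :
    memPow G 3 a ↔ ∃ p r s : Fin n × Fin n, G.Adj p.1 p.2 ∧ G.Adj r.1 r.2 ∧ G.Adj s.1 s.2 ∧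
      ∀ j, edgeExponent p j + edgeExponent r j + edgeExponent s j ≤ a j := by
  rw [memPow_iff]
  constructor
  · rintro ⟨e, hadj, hle⟩
    exact ⟨e 0, e 1, e 2, hadj 0, hadj 1, hadj 2,
      fun j => by simpa only [Fin.sum_univ_three] using hle j⟩
  · rintro ⟨p, r, s, hp, hr, hs, hle⟩
    refine ⟨![p, r, s], fun i => by fin_cases i <;> assumption, fun j => ?_⟩
    simpa [Fin.sum_univ_three] using hle j

lemma mem_genW_of_sum_eq {n q : ℕ} {G : SimpleGraph (Fin n)} {c u : Fin n → ℕ}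
    (hδ : deltaC G c = q) (hc : bdd c u) (hm : memPow G q u) (hs : ∑ j, u j = 2 * q) :
    u ∈ genW G c :=
  ⟨hc, hδ ▸ hm, fun _ hb hmb => (hδ ▸ hmb).eq_of_le_of_sum_eq hs hb⟩

set_option maxRecDepth 10000 in
lemma not_memPow_G6_three : ¬ memPow G6 3 fun _ => 1 := by
  rw [memPow_three_iff]
  decide

set_option maxRecDepth 10000 in
lemma not_memPow_G6_two : ¬ memPow G6 2 ![0,0,1,1,1,1] := by
  rw [memPow_two_iff]
  decide

lemma isGreatest_G6 :
    IsGreatest {q | ∃ a, bdd (fun _ : Fin 6 => 1) a ∧ memPow G6 q a} 2 := by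
  refine ⟨⟨fun _ => 1, fun _ => le_rfl,
    memPow_two_iff.2 ⟨(0,1), (3,4), by decide, by decide, by decide⟩⟩, ?_⟩
  rintro q ⟨a, hbdd, hm⟩
  by_contra! h
  exact not_memPow_G6_three ((hm.mono hbdd).of_le h)

/-- For the graph `G6` and `c = (1,…,1)`, `δ_c(I(G)) = 2`, the monomials
`x₁x₃x₄x₅` and `x₂x₃x₄x₆` are in `W(c,G)`, but `x₃x₄x₅x₆ ∉ (I(G)²)_c`; hence `W(c,G)`
does not enjoy the strong exchange property. -/
theorem stmt6 :
    IsGreatest {q | ∃ a, bdd (fun _ : Fin 6 => 1) a ∧ memPow G6 q a} 2 ∧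
    (![1,0,1,1,1,0] : Fin 6 → ℕ) ∈ genW G6 (fun _ => 1) ∧
    (![0,1,1,1,0,1] : Fin 6 → ℕ) ∈ genW G6 (fun _ => 1) ∧
    ¬ memPow G6 2 (![0,0,1,1,1,1] : Fin 6 → ℕ) ∧
    ¬ SEPc G6 (fun _ => 1) := by
  have hδ : deltaC G6 (fun _ => 1) = 2 := isGreatest_G6.csSup_eq
  have hu : (![1,0,1,1,1,0] : Fin 6 → ℕ) ∈ genW G6 (fun _ => 1) :=
    mem_genW_of_sum_eq hδ (fun i => by fin_cases i <;> decide)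
      (memPow_two_iff.2 ⟨(0,2), (3,4), by decide, by decide, by decide⟩) (by decide)
  have hv : (![0,1,1,1,0,1] : Fin 6 → ℕ) ∈ genW G6 (fun _ => 1) :=
    mem_genW_of_sum_eq hδ (fun i => by fin_cases i <;> decide)
      (memPow_two_iff.2 ⟨(1,2), (3,5), by decide, by decide, by decide⟩) (by decide)
  refine ⟨isGreatest_G6, hu, hv, not_memPow_G6_two, fun hSEP => ?_⟩
  have hexch : exch ![1,0,1,1,1,0] 0 5 = ![0,0,1,1,1,1] := by
    funext i; fin_cases i <;> rfl
  have hw := (hSEP _ hu _ hv 0 5 (by decide) (by decide)).2.1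
  rw [hδ, hexch] at hw
  exact not_memPow_G6_two hw
end

section
/- Let $G$ be the graph obtained from the path $P_n$ (on vertices $x_1,\ldots,x_n$, $n \geq 2$) by attaching two pendant edges at each endpoint: $V(G) = \{x_1,\ldots,x_{n+4}\}$, $E(G) = E(P_n) \cup \{\{x_1,x_{n+1}\},\{x_1,x_{n+2}\},\{x_n,x_{n+3}\},\{x_n,x_{n+4}\}\}$. Then for $\mathfrak{c} = (1,\ldots,1) \in \mathbb{Z}_{>0}^{n+4}$, the set $\mathcal{W}(\mathfrak{c},G)$ does not enjoy the strong exchange property; in particular, $G$ does not enjoy the strong exchange property. -/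
/-!
With `c = 1` a `c`-bounded monomial lies in `I(G)^q` iff it is divisible by the product of a
matching with `q` edges. In `G10 n` the two pendants at vertex `0` (and likewise at `n - 1`)
can only be matched through that vertex, so a matching uses at most one pendant at each end and
`δ_c = ⌊n/2⌋ + 1`. The products `u`, `v` of the maximum matchings through the pendants `n, n + 2`
and `n + 1, n + 3` lie in `W`, but exchanging `x_n` in `u` for `x_{n+3}` leaves no pendant at `0`
and two at `n - 1`: the support then has only `2⌊n/2⌋ + 1` vertices usable by a matching, too
few for `⌊n/2⌋ + 1` edges.
-/

open Finset

/-- The graph obtained from the path `P_n` (vertices `0,…,n-1`) by attaching two pendant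
edges at each endpoint: pendant vertices `n, n+1` at `0` and `n+2, n+3` at `n-1`. -/
def G10 (n : ℕ) : SimpleGraph (Fin (n + 4)) :=
  SimpleGraph.fromRel (fun i j =>
    (i.val + 1 = j.val ∧ j.val < n) ∨
    (i.val = 0 ∧ (j.val = n ∨ j.val = n + 1)) ∨
    (i.val = n - 1 ∧ (j.val = n + 2 ∨ j.val = n + 3)))

section EdgeDegree

variable {α : Type*} [DecidableEq α] {q : ℕ}

def incid (p : α × α) (j : α) : ℕ :=
  (if p.1 = j then 1 else 0) + (if p.2 = j then 1 else 0)

/-- The exponent vector of the monomial `∏ i, x_{(e i).1} x_{(e i).2}`. -/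
def edgeDeg (e : Fin q → α × α) (j : α) : ℕ :=
  ∑ i, incid (e i) j

theorem sum_incid [Fintype α] (p : α × α) : ∑ j, incid p j = 2 := by
  simp [incid, sum_add_distrib]

theorem sum_edgeDeg [Fintype α] (e : Fin q → α × α) : ∑ j, edgeDeg e j = 2 * q := by
  simp only [edgeDeg]
  rw [sum_comm]
  simp [sum_incid, mul_comm]

theorem one_le_edgeDeg {e : Fin q → α × α} {j : α} (i : Fin q) (h : (e i).1 = j ∨ (e i).2 = j) :
    1 ≤ edgeDeg e j :=
  calc 1 ≤ incid (e i) j := by rcases h with h | h <;> simp [incid, h]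
    _ ≤ edgeDeg e j :=
      single_le_sum (f := fun i => incid (e i) j) (fun _ _ => Nat.zero_le _) (mem_univ i)

theorem edgeDeg_eq_zero {e : Fin q → α × α} {j : α} (h : ∀ i, (e i).1 ≠ j ∧ (e i).2 ≠ j) :
    edgeDeg e j = 0 :=
  sum_eq_zero fun i _ => by simp [incid, (h i).1, (h i).2]

theorem edgeDeg_le_one {e : Fin q → α × α} (hne : ∀ i, (e i).1 ≠ (e i).2)
    (idx : α → Fin q) (hidx : ∀ i, idx (e i).1 = i ∧ idx (e i).2 = i) (j : α) :
    edgeDeg e j ≤ 1 := by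
  rw [edgeDeg, sum_eq_single (idx j)]
  · have := hne (idx j)
    unfold incid
    split_ifs with h1 h2 <;> simp_all
  · intro i _ hi
    have := hidx i
    unfold incid
    split_ifs with h1 h2 <;> simp_all
  · simp

end EdgeDegree

section MonomialsOfEdgeIdeals

variable {m q : ℕ} {G : SimpleGraph (Fin m)}

theorem exch_apply_of_ne {m : ℕ} {u : Fin m → ℕ} {ξ ρ i : Fin m} (hρ : i ≠ ρ) (hξ : i ≠ ξ) :
    exch u ξ ρ i = u i := by
  simp [exch, hρ, hξ]

theorem memPow_edgeDeg {e : Fin q → Fin m × Fin m} (hadj : ∀ i, G.Adj (e i).1 (e i).2) :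
    memPow G q (edgeDeg e) :=
  ⟨e, hadj, fun _ => le_rfl⟩

theorem two_mul_le_sum_of_memPow {a : Fin m → ℕ} (h : memPow G q a) : 2 * q ≤ ∑ j, a j := by
  obtain ⟨e, -, he⟩ := h
  calc 2 * q = ∑ j, edgeDeg e j := (sum_edgeDeg e).symm
    _ ≤ ∑ j, a j := sum_le_sum fun j _ => he j

theorem deltaC_eq_of_isGreatest {c : Fin m → ℕ}
    (h : IsGreatest {q | ∃ a, bdd c a ∧ memPow G q a} q) : deltaC G c = q :=
  h.csSup_eq

/-- A product of `δ_c` edges is a minimal generator as soon as it is `c`-bounded, because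
every monomial of `I^q` has degree at least `2q`. -/
theorem edgeDeg_mem_genW {c : Fin m → ℕ} {e : Fin q → Fin m × Fin m}
    (hadj : ∀ i, G.Adj (e i).1 (e i).2) (hq : deltaC G c = q) (hc : bdd c (edgeDeg e)) :
    edgeDeg e ∈ genW G c := by
  subst hq
  refine ⟨hc, memPow_edgeDeg hadj, fun b hb hbq => funext fun j => ?_⟩
  have hsum : ∑ j, b j = ∑ j, edgeDeg e j :=
    le_antisymm (sum_le_sum fun j _ => hb j) (sum_edgeDeg e ▸ two_mul_le_sum_of_memPow hbq)
  exact (sum_eq_sum_iff_of_le fun j _ => hb j).1 hsum j (mem_univ j)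

end MonomialsOfEdgeIdeals

namespace G10

variable {n : ℕ}

def pendant (n : ℕ) (k : Fin 4) : Fin (n + 4) := Fin.natAdd n k

def pathEnd (n : ℕ) : Fin (n + 4) := ⟨n - 1, by omega⟩

theorem pendant_injective : Function.Injective (pendant n) :=
  fun _ _ h => by simpa [pendant] using h

theorem sum_eq_sum_path_add_pendants (a : Fin (n + 4) → ℕ) :
    ∑ j, a j = ∑ i : Fin n, a (Fin.castAdd 4 i) + a (pendant n 0) + a (pendant n 1) +
      a (pendant n 2) + a (pendant n 3) := by
  rw [Fin.sum_univ_add, Fin.sum_univ_four]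
  simp only [pendant, add_assoc]

theorem incid_pendant_le (hn : 1 ≤ n) {x y : Fin (n + 4)} (h : (G10 n).Adj x y) :
    incid (x, y) (pendant n 0) + incid (x, y) (pendant n 1) ≤ incid (x, y) 0 ∧
    incid (x, y) (pendant n 2) + incid (x, y) (pendant n 3) ≤ incid (x, y) (pathEnd n) := by
  rw [G10, SimpleGraph.fromRel_adj] at h
  simp only [ne_eq, Fin.ext_iff] at h
  simp only [incid, pendant, pathEnd, Fin.ext_iff, Fin.val_natAdd, Fin.val_zero]
  constructor <;> split_ifs <;> omega

theorem edgeDeg_pendant_le (hn : 1 ≤ n) {q : ℕ} {e : Fin q → Fin (n + 4) × Fin (n + 4)}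
    (hadj : ∀ i, (G10 n).Adj (e i).1 (e i).2) :
    edgeDeg e (pendant n 0) + edgeDeg e (pendant n 1) ≤ edgeDeg e 0 ∧
    edgeDeg e (pendant n 2) + edgeDeg e (pendant n 3) ≤ edgeDeg e (pathEnd n) := by
  simp only [edgeDeg, ← sum_add_distrib]
  exact ⟨sum_le_sum fun i _ => (incid_pendant_le hn (hadj i)).1,
    sum_le_sum fun i _ => (incid_pendant_le hn (hadj i)).2⟩

/-- Each pair of pendants is reached only through its attaching vertex, so it contributes at
most one edge; all other edges lie inside the path. -/
theorem two_mul_le_of_memPow (hn : 1 ≤ n) {q : ℕ} {a : Fin (n + 4) → ℕ}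
    (h : memPow (G10 n) q a) :
    2 * q ≤ ∑ i : Fin n, a (Fin.castAdd 4 i) + min (a 0) (a (pendant n 0) + a (pendant n 1)) +
      min (a (pathEnd n)) (a (pendant n 2) + a (pendant n 3)) := by
  obtain ⟨e, hadj, he⟩ := h
  replace he : ∀ j, edgeDeg e j ≤ a j := he
  have hsum := sum_edgeDeg e
  rw [sum_eq_sum_path_add_pendants] at hsum
  have hpath : ∑ i : Fin n, edgeDeg e (Fin.castAdd 4 i) ≤ ∑ i : Fin n, a (Fin.castAdd 4 i) :=
    sum_le_sum fun i _ => he _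
  have hpend := edgeDeg_pendant_le hn hadj
  have := he 0; have := he (pathEnd n)
  have := he (pendant n 0); have := he (pendant n 1)
  have := he (pendant n 2); have := he (pendant n 3)
  omega

def stdMatching (n : ℕ) (a b : Fin (n + 4)) (i : Fin (n / 2 + 1)) : Fin (n + 4) × Fin (n + 4) :=
  if i.val = 0 then (0, a)
  else if i.val = n / 2 then (pathEnd n, b)
  else (⟨2 * i.val - 1, by omega⟩, ⟨2 * i.val, by omega⟩)

def stdMatchingIndex (n : ℕ) (j : Fin (n + 4)) : Fin (n / 2 + 1) :=
  ⟨if j.val < n then (j.val + 1) / 2 else if j.val < n + 2 then 0 else n / 2,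
    by split_ifs <;> omega⟩

section

variable {a b : Fin (n + 4)}

theorem stdMatching_fst_val (i : Fin (n / 2 + 1)) :
    (stdMatching n a b i).1.val = if i.val = 0 then 0 else if i.val = n / 2 then n - 1
      else 2 * i.val - 1 := by
  unfold stdMatching
  split_ifs <;> rfl

theorem stdMatching_snd_val (i : Fin (n / 2 + 1)) :
    (stdMatching n a b i).2.val = if i.val = 0 then a.val else if i.val = n / 2 then b.val
      else 2 * i.val := by
  unfold stdMatching
  split_ifs <;> rfl

theorem stdMatching_adj (hn : 1 ≤ n) (ha : a = pendant n 0 ∨ a = pendant n 1)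
    (hb : b = pendant n 2 ∨ b = pendant n 3) (i : Fin (n / 2 + 1)) :
    (G10 n).Adj (stdMatching n a b i).1 (stdMatching n a b i).2 := by
  have := i.isLt
  simp only [Fin.ext_iff, pendant, Fin.val_natAdd] at ha hb
  rw [G10, SimpleGraph.fromRel_adj]
  simp only [ne_eq, Fin.ext_iff, stdMatching_fst_val, stdMatching_snd_val]
  split_ifs <;> omega

theorem stdMatchingIndex_stdMatching (hn : 1 ≤ n) (ha : a = pendant n 0 ∨ a = pendant n 1)
    (hb : b = pendant n 2 ∨ b = pendant n 3) (i : Fin (n / 2 + 1)) :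
    stdMatchingIndex n (stdMatching n a b i).1 = i ∧
      stdMatchingIndex n (stdMatching n a b i).2 = i := by
  have := i.isLt
  simp only [Fin.ext_iff, pendant, Fin.val_natAdd] at ha hb
  simp only [stdMatchingIndex, Fin.ext_iff, stdMatching_fst_val, stdMatching_snd_val]
  split_ifs <;> omega

theorem bdd_edgeDeg_stdMatching (hn : 1 ≤ n) (ha : a = pendant n 0 ∨ a = pendant n 1)
    (hb : b = pendant n 2 ∨ b = pendant n 3) :
    bdd (fun _ => 1) (edgeDeg (stdMatching n a b)) :=
  edgeDeg_le_one (fun i => (G10 n).ne_of_adj (stdMatching_adj hn ha hb i))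
    (stdMatchingIndex n) (stdMatchingIndex_stdMatching hn ha hb)

theorem edgeDeg_stdMatching_pendant (hn : 2 ≤ n) (ha : a = pendant n 0 ∨ a = pendant n 1)
    (hb : b = pendant n 2 ∨ b = pendant n 3) (k : Fin 4) :
    edgeDeg (stdMatching n a b) (pendant n k) =
      if pendant n k = a ∨ pendant n k = b then 1 else 0 := by
  split_ifs with hk
  · refine le_antisymm (bdd_edgeDeg_stdMatching (by omega) ha hb _) ?_
    rcases hk with hk | hk
    · refine one_le_edgeDeg 0 (.inr ?_)
      simp [stdMatching, hk]
    · refine one_le_edgeDeg (Fin.last _) (.inr (Fin.ext ?_))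
      rw [stdMatching_snd_val, hk]
      simp only [Fin.val_last]
      split_ifs <;> omega
  · refine edgeDeg_eq_zero fun i => ?_
    have := i.isLt
    simp only [Fin.ext_iff, pendant, Fin.val_natAdd, not_or] at ha hb hk
    simp only [ne_eq, Fin.ext_iff, stdMatching_fst_val, stdMatching_snd_val, pendant,
      Fin.val_natAdd]
    split_ifs <;> omega

end

theorem deltaC_eq (hn : 1 ≤ n) : deltaC (G10 n) (fun _ => 1) = n / 2 + 1 := by
  refine deltaC_eq_of_isGreatest ⟨⟨_, bdd_edgeDeg_stdMatching hn (.inl rfl) (.inl rfl),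
    memPow_edgeDeg (stdMatching_adj (a := pendant n 0) (b := pendant n 2) hn (.inl rfl)
      (.inl rfl))⟩, ?_⟩
  rintro q ⟨a, ha, hq⟩
  have hcount := two_mul_le_of_memPow hn hq
  have hpath : ∑ i : Fin n, a (Fin.castAdd 4 i) ≤ n := by
    simpa using sum_le_sum fun i (_ : i ∈ univ) => ha (Fin.castAdd 4 i)
  have h0 : a 0 ≤ 1 := ha 0
  have h1 : a (pathEnd n) ≤ 1 := ha (pathEnd n)
  omega

theorem stdMatching_mem_genW (hn : 1 ≤ n) {a b : Fin (n + 4)}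
    (ha : a = pendant n 0 ∨ a = pendant n 1) (hb : b = pendant n 2 ∨ b = pendant n 3) :
    edgeDeg (stdMatching n a b) ∈ genW (G10 n) (fun _ => 1) :=
  edgeDeg_mem_genW (stdMatching_adj hn ha hb) (deltaC_eq hn) (bdd_edgeDeg_stdMatching hn ha hb)

theorem exch_stdMatching_not_mem_genW (hn : 2 ≤ n) :
    exch (edgeDeg (stdMatching n (pendant n 0) (pendant n 2))) (pendant n 0) (pendant n 3) ∉
      genW (G10 n) (fun _ => 1) := by
  set u := edgeDeg (stdMatching n (pendant n 0) (pendant n 2))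
  set x := exch u (pendant n 0) (pendant n 3)
  rintro ⟨hbdd, hmem, -⟩
  rw [deltaC_eq (by omega)] at hmem
  have hcount := two_mul_le_of_memPow (by omega) hmem
  have hsum : ∑ j, u j = 2 * (n / 2 + 1) := sum_edgeDeg _
  rw [sum_eq_sum_path_add_pendants] at hsum
  have hu : ∀ k, u (pendant n k) =
      if pendant n k = pendant n 0 ∨ pendant n k = pendant n 2 then 1 else 0 :=
    edgeDeg_stdMatching_pendant hn (.inl rfl) (.inl rfl)
  have hpath : ∀ i : Fin n, x (Fin.castAdd 4 i) = u (Fin.castAdd 4 i) := fun i =>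
    have := i.isLt
    exch_apply_of_ne (Fin.ne_of_val_ne (by simp [pendant]; omega))
      (Fin.ne_of_val_ne (by simp [pendant]; omega))
  have hu0 : u (pendant n 0) = 1 := by simp [hu]
  have hu1 : u (pendant n 1) = 0 := by simp [hu, pendant_injective.eq_iff]
  have hu2 : u (pendant n 2) = 1 := by simp [hu]
  have hx0 : x (pendant n 0) = 0 := by simp [x, exch, pendant_injective.eq_iff, hu0]
  have hx1 : x (pendant n 1) = 0 := by simp [x, exch, pendant_injective.eq_iff, hu1]
  have hxEnd : x (pathEnd n) ≤ 1 := hbdd (pathEnd n)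
  simp only [hpath, hx0, hx1] at hcount
  omega

end G10

open G10

/-- For `n ≥ 2` and `c = (1,…,1)`, `W(c, G10 n)` does not enjoy the strong
exchange property; in particular `G10 n` does not enjoy the strong exchange property. -/
theorem stmt10 (n : ℕ) (hn : 2 ≤ n) :
    ¬ SEPc (G10 n) (fun _ => 1) ∧ ¬ SEP (G10 n) := by
  have hW : ¬ SEPc (G10 n) (fun _ => 1) := by
    intro h
    have hu := stdMatching_mem_genW (a := pendant n 0) (b := pendant n 2) (by omega)
      (.inl rfl) (.inl rfl)
    have hv := stdMatching_mem_genW (a := pendant n 1) (b := pendant n 3) (by omega)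
      (.inr rfl) (.inr rfl)
    refine exch_stdMatching_not_mem_genW hn (h _ hu _ hv _ _ ?_ ?_) <;>
      rw [edgeDeg_stdMatching_pendant hn (.inl rfl) (.inl rfl),
        edgeDeg_stdMatching_pendant hn (.inr rfl) (.inr rfl)] <;>
      simp [pendant_injective.eq_iff]
  exact ⟨hW, fun h => hW (h _ fun _ => one_pos)⟩
end

section
/- Let $G$ be the graph obtained from a star graph with center $x_0$ and leaves $x_1,\ldots,x_n$ by attaching one pendant edge to each of the leaves $x_1,\ldots,x_k$ (for some $0 \le k \le n$), i.e., adding vertices $x_{n+1},\ldots,x_{n+k}$ and edges $\{x_i,x_{n+i}\}$ for $1 \le i \le k$. Then $G$ enjoys the strong exchange property: for every $\mathfrak{c} \in \mathbb{Z}_{>0}^{n+k+1}$, the set $\mathcal{W}(\mathfrak{c},G)$ enjoys the strong exchange property. -/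
open Finset

/-- The star graph with center `0` and leaves `1,…,n`, with a pendant edge `{i, n+i}`
attached to each leaf `i` with `1 ≤ i ≤ k`. -/
def starPend (n k : ℕ) : SimpleGraph (Fin (n + k + 1)) :=
  SimpleGraph.fromRel (fun i j =>
    (i.val = 0 ∧ 1 ≤ j.val ∧ j.val ≤ n) ∨
    (1 ≤ i.val ∧ i.val ≤ k ∧ j.val = i.val + n))

namespace SP13

/-- helper sum lemmas over `range m` -/
lemma sum_congr_at {m : ℕ} {f g : ℕ → ℕ} (h : ∀ i, i < m → g i = f i) :
    ∑ i ∈ range m, g i = ∑ i ∈ range m, f i :=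
  Finset.sum_congr rfl (fun i hi => h i (mem_range.mp hi))

lemma sum_succ_at {m t : ℕ} (ht : t < m) {f g : ℕ → ℕ}
    (hne : ∀ i, i < m → i ≠ t → g i = f i) (heq : g t = f t + 1) :
    ∑ i ∈ range m, g i = (∑ i ∈ range m, f i) + 1 := by
  have htm : t ∈ range m := mem_range.mpr ht
  rw [← Finset.add_sum_erase _ g htm, ← Finset.add_sum_erase _ f htm]
  have : ∑ i ∈ (range m).erase t, g i = ∑ i ∈ (range m).erase t, f i :=
    Finset.sum_congr rfl (fun i hi => hne i (mem_range.mp (Finset.mem_of_mem_erase hi))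
      (Finset.ne_of_mem_erase hi))
  omega

lemma sum_pred_at {m t : ℕ} (ht : t < m) {f g : ℕ → ℕ}
    (hne : ∀ i, i < m → i ≠ t → g i = f i) (heq : g t + 1 = f t) :
    (∑ i ∈ range m, g i) + 1 = ∑ i ∈ range m, f i := by
  have htm : t ∈ range m := mem_range.mpr ht
  rw [← Finset.add_sum_erase _ g htm, ← Finset.add_sum_erase _ f htm]
  have : ∑ i ∈ (range m).erase t, g i = ∑ i ∈ (range m).erase t, f i :=
    Finset.sum_congr rfl (fun i hi => hne i (mem_range.mp (Finset.mem_of_mem_erase hi))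
      (Finset.ne_of_mem_erase hi))
  omega

lemma sum_exch_at {m t s : ℕ} (ht : t < m) (hs : s < m) (hts : t ≠ s) {f g : ℕ → ℕ}
    (hne : ∀ i, i < m → i ≠ t → i ≠ s → g i = f i) (h1 : g t = f t + 1) (h2 : g s + 1 = f s) :
    ∑ i ∈ range m, g i = ∑ i ∈ range m, f i := by
  have htm : t ∈ range m := mem_range.mpr ht
  have hsm : s ∈ (range m).erase t := Finset.mem_erase.mpr ⟨fun h => hts h.symm, mem_range.mpr hs⟩
  rw [← Finset.add_sum_erase _ g htm, ← Finset.add_sum_erase _ f htm,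
    ← Finset.add_sum_erase _ g hsm, ← Finset.add_sum_erase _ f hsm]
  have : ∑ i ∈ ((range m).erase t).erase s, g i = ∑ i ∈ ((range m).erase t).erase s, f i := by
    refine Finset.sum_congr rfl (fun i hi => ?_)
    have h3 := Finset.ne_of_mem_erase hi
    have h4 := Finset.mem_of_mem_erase hi
    exact hne i (mem_range.mp (Finset.mem_of_mem_erase h4)) (Finset.ne_of_mem_erase h4) h3
  omega

lemma exists_lt_of_sum_le {m : ℕ} {f g : ℕ → ℕ}
    (h : (∑ i ∈ range m, f i) ≤ ∑ i ∈ range m, g i) {t : ℕ} (ht : t < m)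
    (h2 : g t < f t) : ∃ s, s < m ∧ f s < g s := by
  by_contra hc
  push_neg at hc
  have : ∑ i ∈ range m, g i < ∑ i ∈ range m, f i :=
    Finset.sum_lt_sum (fun i hi => hc i (mem_range.mp hi)) ⟨t, mem_range.mpr ht, h2⟩
  omega

lemma eq_of_le_of_sum_le {ι : Type*} [Fintype ι] {f g : ι → ℕ} (h : ∀ i, f i ≤ g i)
    (hs : (∑ i, g i) ≤ ∑ i, f i) : f = g := by
  funext i
  by_contra hne
  have h1 : f i < g i := lt_of_le_of_ne (h i) hne
  have : (∑ j, f j) < ∑ j, g j :=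
    Finset.sum_lt_sum (fun j _ => h j) ⟨i, Finset.mem_univ i, h1⟩
  omega

end SP13
namespace SP13

variable {N : ℕ}

def addv (x y : Fin N) (a : Fin N → ℕ) : Fin N → ℕ :=
  fun j => a j + ((if x = j then 1 else 0) + (if y = j then 1 else 0))

def subv (x y : Fin N) (a : Fin N → ℕ) : Fin N → ℕ :=
  fun j => a j - ((if x = j then 1 else 0) + (if y = j then 1 else 0))

lemma addv_ne {x y j : Fin N} (hx : x ≠ j) (hy : y ≠ j) (a : Fin N → ℕ) :
    addv x y a j = a j := by simp [addv, hx, hy]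

lemma addv_fst {x y : Fin N} (h : y ≠ x) (a : Fin N → ℕ) : addv x y a x = a x + 1 := by
  simp [addv, h]

lemma addv_snd {x y : Fin N} (h : x ≠ y) (a : Fin N → ℕ) : addv x y a y = a y + 1 := by
  simp [addv, h]

lemma subv_ne {x y j : Fin N} (hx : x ≠ j) (hy : y ≠ j) (a : Fin N → ℕ) :
    subv x y a j = a j := by simp [subv, hx, hy]

lemma subv_fst {x y : Fin N} (h : y ≠ x) (a : Fin N → ℕ) : subv x y a x = a x - 1 := by
  simp [subv, h]

lemma subv_snd {x y : Fin N} (h : x ≠ y) (a : Fin N → ℕ) : subv x y a y = a y - 1 := by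
  simp [subv, h]

lemma addv_comm (x y : Fin N) (a : Fin N → ℕ) : addv x y a = addv y x a := by
  funext j; simp [addv]; omega

lemma exch_rho (u : Fin N → ℕ) (ξ ρ : Fin N) : exch u ξ ρ ρ = u ρ + 1 := by simp [exch]

lemma exch_xi (u : Fin N → ℕ) {ξ ρ : Fin N} (h : ξ ≠ ρ) : exch u ξ ρ ξ = u ξ - 1 := by
  simp [exch, h]

lemma exch_other (u : Fin N → ℕ) {ξ ρ j : Fin N} (h1 : j ≠ ρ) (h2 : j ≠ ξ) :
    exch u ξ ρ j = u j := by simp [exch, h1, h2]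

/-! ### memPow lemmas -/

lemma memPow_mono {G : SimpleGraph (Fin N)} {q : ℕ} {a b : Fin N → ℕ}
    (h : ∀ j, a j ≤ b j) (hm : memPow G q a) : memPow G q b := by
  obtain ⟨e, he, hc⟩ := hm
  exact ⟨e, he, fun j => le_trans (hc j) (h j)⟩

lemma memPow_zero (G : SimpleGraph (Fin N)) (a : Fin N → ℕ) : memPow G 0 a :=
  ⟨Fin.elim0, fun i => i.elim0, fun j => by simp⟩

lemma memPow_succ {G : SimpleGraph (Fin N)} {q : ℕ} {a : Fin N → ℕ} {x y : Fin N}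
    (hxy : G.Adj x y) (h : memPow G q a) : memPow G (q + 1) (addv x y a) := by
  obtain ⟨e, he, hc⟩ := h
  refine ⟨Fin.snoc e (x, y), ?_, ?_⟩
  · intro i
    refine Fin.lastCases ?_ ?_ i
    · simpa using hxy
    · intro i; simpa using he i
  · intro j
    rw [Fin.sum_univ_castSucc]
    simp only [Fin.snoc_castSucc, Fin.snoc_last]
    exact Nat.add_le_add (hc j) le_rfl

lemma memPow_peel {G : SimpleGraph (Fin N)} {q : ℕ} {a : Fin N → ℕ}
    (h : memPow G (q + 1) a) :
    ∃ x y : Fin N, G.Adj x y ∧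
      (∀ j, ((if x = j then 1 else 0) + (if y = j then 1 else 0) : ℕ) ≤ a j) ∧
      memPow G q (subv x y a) := by
  obtain ⟨e, he, hc⟩ := h
  set x := (e (Fin.last q)).1 with hx
  set y := (e (Fin.last q)).2 with hy
  have key : ∀ j, (∑ i : Fin q, ((if (e i.castSucc).1 = j then 1 else 0)
      + (if (e i.castSucc).2 = j then 1 else 0)))
      + ((if x = j then 1 else 0) + (if y = j then 1 else 0)) ≤ a j := by
    intro j
    have := hc j
    rwa [Fin.sum_univ_castSucc] at this
  refine ⟨x, y, he _, ?_, ?_⟩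
  · intro j
    exact le_trans (Nat.le_add_left _ _) (key j)
  · refine ⟨fun i => e i.castSucc, fun i => he _, fun j => ?_⟩
    have := key j
    simp only [subv]
    omega

end SP13
namespace SP13

def idx (n k j : ℕ) : Fin (n + k + 1) := ⟨j % (n + k + 1), Nat.mod_lt _ (Nat.succ_pos _)⟩

lemma idx_val {n k j : ℕ} (h : j < n + k + 1) : (idx n k j).val = j := Nat.mod_eq_of_lt h

lemma eq_idx {n k j : ℕ} (h : j < n + k + 1) {x : Fin (n + k + 1)} :
    x = idx n k j ↔ x.val = j := by
  rw [Fin.ext_iff, idx_val h]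

lemma idx_ne {n k j j' : ℕ} (h : j < n + k + 1) (h' : j' < n + k + 1) (hne : j ≠ j') :
    idx n k j ≠ idx n k j' := by
  intro heq
  rw [eq_idx h', idx_val h] at heq
  exact hne heq

/-- sum over the leaf variables -/
def Ls (n k : ℕ) (a : Fin (n + k + 1) → ℕ) : ℕ := ∑ i ∈ range n, a (idx n k (i + 1))

/-- sum over the pendant variables -/
def Ps (n k : ℕ) (a : Fin (n + k + 1) → ℕ) : ℕ := ∑ i ∈ range k, a (idx n k (n + i + 1))

/-- the vector `a` is (exactly) a product of edges of `starPend n k` -/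
def Feas (n k : ℕ) (a : Fin (n + k + 1) → ℕ) : Prop :=
  (∀ i, i < k → a (idx n k (n + i + 1)) ≤ a (idx n k (i + 1))) ∧
    a (idx n k 0) + Ps n k a = Ls n k a

lemma sum_univ_eq (n k : ℕ) (a : Fin (n + k + 1) → ℕ) :
    (∑ j, a j) = a (idx n k 0) + Ls n k a + Ps n k a := by
  have h1 : (∑ j, a j) = ∑ j : Fin (n + k + 1), a (idx n k j.val) := by
    refine Finset.sum_congr rfl (fun j _ => ?_)
    congr 1
    exact (Fin.ext (idx_val j.isLt)).symm
  rw [h1, Fin.sum_univ_eq_sum_range (fun j => a (idx n k j)) (n + k + 1),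
    Finset.sum_range_succ' (fun j => a (idx n k j)) (n + k)]
  have h2 : range (n + k) = Finset.Ico 0 (n + k) := by rw [Finset.range_eq_Ico]
  have h3 : (∑ i ∈ Finset.Ico 0 n, a (idx n k (i + 1)))
      + ∑ i ∈ Finset.Ico n (n + k), a (idx n k (i + 1))
      = ∑ i ∈ Finset.Ico 0 (n + k), a (idx n k (i + 1)) :=
    Finset.sum_Ico_consecutive _ (Nat.zero_le n) (Nat.le_add_right n k)
  have h4 : (∑ i ∈ Finset.Ico n (n + k), a (idx n k (i + 1)))
      = ∑ i ∈ range (n + k - n), a (idx n k (n + i + 1)) := by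
    rw [Finset.sum_Ico_eq_sum_range]
  have h5 : n + k - n = k := by omega
  rw [h5] at h4
  rw [h2, ← h3, h4]
  have h6 : (∑ i ∈ Finset.Ico 0 n, a (idx n k (i + 1))) = Ls n k a := by
    rw [Ls, Finset.range_eq_Ico]
  rw [h6, Ps]
  omega

end SP13
namespace SP13

lemma adj_cl {n k : ℕ} {l : ℕ} (hl : l < n) :
    (starPend n k).Adj (idx n k 0) (idx n k (l + 1)) := by
  rw [starPend, SimpleGraph.fromRel_adj]
  constructor
  · exact idx_ne (by omega) (by omega) (by omega)
  · left; left
    refine ⟨idx_val (by omega), ?_, ?_⟩ <;> rw [idx_val (by omega)] <;> omega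

lemma adj_lp {n k : ℕ} (hk : k ≤ n) {i : ℕ} (hi : i < k) :
    (starPend n k).Adj (idx n k (i + 1)) (idx n k (n + i + 1)) := by
  rw [starPend, SimpleGraph.fromRel_adj]
  constructor
  · exact idx_ne (by omega) (by omega) (by omega)
  · left; right
    have h1 : (idx n k (i + 1)).val = i + 1 := idx_val (by omega)
    have h2 : (idx n k (n + i + 1)).val = n + i + 1 := idx_val (by omega)
    exact ⟨by omega, by omega, by omega⟩

lemma adj_cases {n k : ℕ} {x y : Fin (n + k + 1)} (h : (starPend n k).Adj x y) :
    (x.val = 0 ∧ 1 ≤ y.val ∧ y.val ≤ n) ∨ (y.val = 0 ∧ 1 ≤ x.val ∧ x.val ≤ n) ∨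
    (1 ≤ x.val ∧ x.val ≤ k ∧ y.val = x.val + n) ∨
    (1 ≤ y.val ∧ y.val ≤ k ∧ x.val = y.val + n) := by
  rw [starPend, SimpleGraph.fromRel_adj] at h
  tauto

end SP13
namespace SP13

lemma ne_idx {n k j : ℕ} (h : j < n + k + 1) {x : Fin (n + k + 1)} (hne : x.val ≠ j) :
    x ≠ idx n k j := by
  rw [Ne, eq_idx h]; exact hne

lemma le_addv {N : ℕ} (x y j : Fin N) (a : Fin N → ℕ) : a j ≤ addv x y a j :=
  Nat.le_add_right _ _

lemma feas_add_cl (n k : ℕ) {a : Fin (n + k + 1) → ℕ} (hF : Feas n k a)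
    {x y : Fin (n + k + 1)} (hx : x.val = 0) {l : ℕ} (hl : l < n) (hy : y.val = l + 1) :
    Feas n k (addv x y a) ∧ Ls n k (addv x y a) = Ls n k a + 1 := by
  have hxy : x ≠ y := by rw [Ne, Fin.ext_iff]; omega
  have hyi : idx n k (l + 1) = y := ((eq_idx (by omega)).mpr hy).symm
  have hxi : idx n k 0 = x := ((eq_idx (by omega)).mpr hx).symm
  have hL : Ls n k (addv x y a) = Ls n k a + 1 := by
    simp only [Ls]
    refine sum_succ_at hl (fun i hi hne => ?_) ?_
    · exact addv_ne (ne_idx (by omega) (by omega)) (ne_idx (by omega) (by omega)) a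
    · rw [hyi]; exact addv_snd hxy a
  have hP : Ps n k (addv x y a) = Ps n k a := by
    simp only [Ps]
    refine sum_congr_at (fun i hi => ?_)
    exact addv_ne (ne_idx (by omega) (by omega)) (ne_idx (by omega) (by omega)) a
  refine ⟨⟨?_, ?_⟩, hL⟩
  · intro i hik
    have hp : addv x y a (idx n k (n + i + 1)) = a (idx n k (n + i + 1)) :=
      addv_ne (ne_idx (by omega) (by omega)) (ne_idx (by omega) (by omega)) a
    rw [hp]
    exact le_trans (hF.1 i hik) (le_addv _ _ _ _)
  · rw [hxi, addv_fst (Ne.symm hxy) a, hP, hL]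
    have := hF.2
    rw [hxi] at this
    omega

lemma feas_add_lp (n k : ℕ) (hk : k ≤ n) {a : Fin (n + k + 1) → ℕ} (hF : Feas n k a)
    {x y : Fin (n + k + 1)} {l j : ℕ} (hl : l < n) (hj : j < k)
    (hx : x.val = l + 1) (hy : y.val = n + j + 1)
    (hcond : a (idx n k (n + j + 1)) < a (idx n k (j + 1)) ∨ l = j) :
    Feas n k (addv x y a) ∧ Ls n k (addv x y a) = Ls n k a + 1 := by
  have hxy : x ≠ y := by rw [Ne, Fin.ext_iff]; omega
  have hxi : idx n k (l + 1) = x := ((eq_idx (by omega)).mpr hx).symm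
  have hyi : idx n k (n + j + 1) = y := ((eq_idx (by omega)).mpr hy).symm
  have hL : Ls n k (addv x y a) = Ls n k a + 1 := by
    simp only [Ls]
    refine sum_succ_at hl (fun i hi hne => ?_) ?_
    · exact addv_ne (ne_idx (by omega) (by omega)) (ne_idx (by omega) (by omega)) a
    · rw [hxi]; exact addv_fst (Ne.symm hxy) a
  have hP : Ps n k (addv x y a) = Ps n k a + 1 := by
    simp only [Ps]
    refine sum_succ_at hj (fun i hi hne => ?_) ?_
    · exact addv_ne (ne_idx (by omega) (by omega)) (ne_idx (by omega) (by omega)) a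
    · rw [hyi]; exact addv_snd hxy a
  have h0 : addv x y a (idx n k 0) = a (idx n k 0) :=
    addv_ne (ne_idx (by omega) (by omega)) (ne_idx (by omega) (by omega)) a
  refine ⟨⟨?_, ?_⟩, hL⟩
  · intro i hik
    by_cases hij : i = j
    · have hyi' : idx n k (n + i + 1) = y := by rw [hij]; exact hyi
      rw [hyi', addv_snd hxy a]
      by_cases hli : l = i
      · have hxi' : idx n k (i + 1) = x := by rw [← hli]; exact hxi
        rw [hxi', addv_fst (Ne.symm hxy) a]
        have h1 := hF.1 i hik
        rw [hxi', hyi'] at h1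
        omega
      · have hq : addv x y a (idx n k (i + 1)) = a (idx n k (i + 1)) :=
          addv_ne (ne_idx (by omega) (by omega)) (ne_idx (by omega) (by omega)) a
        rw [hq]
        rcases hcond with hc | hc
        · rw [← hij] at hc
          rw [hyi'] at hc
          omega
        · rw [hij] at hli
          exact absurd hc hli
    · have hp : addv x y a (idx n k (n + i + 1)) = a (idx n k (n + i + 1)) :=
        addv_ne (ne_idx (by omega) (by omega)) (ne_idx (by omega) (by omega)) a
      rw [hp]
      exact le_trans (hF.1 i hik) (le_addv _ _ _ _)
  · rw [h0, hP, hL]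
    have := hF.2
    omega

end SP13
namespace SP13

lemma feas_memPow (n k : ℕ) (hk : k ≤ n) :
    ∀ q (a : Fin (n + k + 1) → ℕ), Feas n k a → Ls n k a = q → memPow (starPend n k) q a := by
  intro q
  induction q with
  | zero => intro a _ _; exact memPow_zero _ _
  | succ q ih =>
    intro a hF hL
    by_cases hp : ∃ i, i < k ∧ 0 < a (idx n k (n + i + 1))
    · obtain ⟨i, hik, hpos⟩ := hp
      have hxy : idx n k (i + 1) ≠ idx n k (n + i + 1) :=
        idx_ne (by omega) (by omega) (by omega)
      have hle : a (idx n k (n + i + 1)) ≤ a (idx n k (i + 1)) := hF.1 i hik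
      set b := subv (idx n k (i + 1)) (idx n k (n + i + 1)) a with hbdef
      have hbx : b (idx n k (i + 1)) = a (idx n k (i + 1)) - 1 := subv_fst (Ne.symm hxy) a
      have hby : b (idx n k (n + i + 1)) = a (idx n k (n + i + 1)) - 1 := subv_snd hxy a
      have hLb : Ls n k b + 1 = Ls n k a := by
        simp only [Ls]
        refine sum_pred_at (show i < n by omega) (fun i' hi' hne => ?_) ?_
        · exact subv_ne (idx_ne (by omega) (by omega) (by omega))
            (idx_ne (by omega) (by omega) (by omega)) a
        · rw [hbx]; omega
      have hPb : Ps n k b + 1 = Ps n k a := by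
        simp only [Ps]
        refine sum_pred_at hik (fun i' hi' hne => ?_) ?_
        · exact subv_ne (idx_ne (by omega) (by omega) (by omega))
            (idx_ne (by omega) (by omega) (by omega)) a
        · rw [hby]; omega
      have hb0 : b (idx n k 0) = a (idx n k 0) :=
        subv_ne (idx_ne (by omega) (by omega) (by omega))
          (idx_ne (by omega) (by omega) (by omega)) a
      have hFb : Feas n k b := by
        constructor
        · intro i' hik'
          by_cases hii : i' = i
          · rw [hii, hbx, hby]; omega
          · have h1 : b (idx n k (n + i' + 1)) = a (idx n k (n + i' + 1)) :=
              subv_ne (idx_ne (by omega) (by omega) (by omega))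
                (idx_ne (by omega) (by omega) (by omega)) a
            have h2 : b (idx n k (i' + 1)) = a (idx n k (i' + 1)) :=
              subv_ne (idx_ne (by omega) (by omega) (by omega))
                (idx_ne (by omega) (by omega) (by omega)) a
            rw [h1, h2]; exact hF.1 i' hik'
        · have := hF.2; rw [hb0]; omega
      have hm := memPow_succ (adj_lp hk hik) (ih b hFb (by omega))
      refine memPow_mono (fun j => ?_) hm
      by_cases hjx : idx n k (i + 1) = j
      · rw [← hjx, addv_fst (Ne.symm hxy) b, hbx]; omega
      · by_cases hjy : idx n k (n + i + 1) = j
        · rw [← hjy, addv_snd hxy b, hby]; omega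
        · rw [addv_ne hjx hjy b, hbdef, subv_ne hjx hjy a]
    · push_neg at hp
      have hz : ∀ i, i < k → a (idx n k (n + i + 1)) = 0 := fun i hi => by
        have := hp i hi; omega
      have hPs : Ps n k a = 0 :=
        Finset.sum_eq_zero (fun i hi => hz i (mem_range.mp hi))
      have ha0 : a (idx n k 0) = q + 1 := by have := hF.2; omega
      have hex : ∃ l, l < n ∧ 0 < a (idx n k (l + 1)) := by
        by_contra hc
        push_neg at hc
        have : Ls n k a = 0 :=
          Finset.sum_eq_zero (fun i hi => by have := hc i (mem_range.mp hi); omega)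
        omega
      obtain ⟨l, hl, hposl⟩ := hex
      have hxy : idx n k 0 ≠ idx n k (l + 1) := idx_ne (by omega) (by omega) (by omega)
      set b := subv (idx n k 0) (idx n k (l + 1)) a with hbdef
      have hbx : b (idx n k 0) = a (idx n k 0) - 1 := subv_fst (Ne.symm hxy) a
      have hby : b (idx n k (l + 1)) = a (idx n k (l + 1)) - 1 := subv_snd hxy a
      have hLb : Ls n k b + 1 = Ls n k a := by
        simp only [Ls]
        refine sum_pred_at hl (fun i' hi' hne => ?_) ?_
        · exact subv_ne (idx_ne (by omega) (by omega) (by omega))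
            (idx_ne (by omega) (by omega) (by omega)) a
        · rw [hby]; omega
      have hPb : Ps n k b = Ps n k a := by
        simp only [Ps]
        refine sum_congr_at (fun i hi => ?_)
        exact subv_ne (idx_ne (by omega) (by omega) (by omega))
          (idx_ne (by omega) (by omega) (by omega)) a
      have hFb : Feas n k b := by
        constructor
        · intro i' hik'
          have h1 : b (idx n k (n + i' + 1)) = a (idx n k (n + i' + 1)) :=
            subv_ne (idx_ne (by omega) (by omega) (by omega))
              (idx_ne (by omega) (by omega) (by omega)) a
          rw [h1, hz i' hik']
          exact Nat.zero_le _
        · have := hF.2; rw [hbx, hPb]; omega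
      have hm := memPow_succ (adj_cl hl) (ih b hFb (by omega))
      refine memPow_mono (fun j => ?_) hm
      by_cases hjx : idx n k 0 = j
      · rw [← hjx, addv_fst (Ne.symm hxy) b, hbx]; omega
      · by_cases hjy : idx n k (l + 1) = j
        · rw [← hjy, addv_snd hxy b, hby]; omega
        · rw [addv_ne hjx hjy b, hbdef, subv_ne hjx hjy a]

lemma memPow_struct (n k : ℕ) (hk : k ≤ n) :
    ∀ q (a : Fin (n + k + 1) → ℕ), memPow (starPend n k) q a →
      ∃ b, (∀ j, b j ≤ a j) ∧ Feas n k b ∧ Ls n k b = q := by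
  intro q
  induction q with
  | zero =>
    intro a _
    refine ⟨fun _ => 0, fun j => Nat.zero_le _, ⟨fun i hi => le_rfl, ?_⟩, ?_⟩
    · simp [Ps, Ls]
    · simp [Ls]
  | succ q ih =>
    intro a hm
    obtain ⟨x, y, hadj, hcnt, hsub⟩ := memPow_peel hm
    obtain ⟨b, hb, hFb, hLb⟩ := ih _ hsub
    have hble : ∀ j, addv x y b j ≤ a j := by
      intro j
      have h4 := hb j
      have h5 := hcnt j
      simp only [addv, subv] at *
      split_ifs at * <;> omega
    refine ⟨addv x y b, hble, ?_⟩
    rcases adj_cases hadj with ⟨h1, h2, h3⟩ | ⟨h1, h2, h3⟩ | ⟨h1, h2, h3⟩ | ⟨h1, h2, h3⟩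
    · have hres := feas_add_cl n k hFb h1 (show y.val - 1 < n by omega)
        (show y.val = (y.val - 1) + 1 by omega)
      exact ⟨hres.1, by rw [hres.2, hLb]⟩
    · rw [addv_comm]
      have hres := feas_add_cl n k hFb h1 (show x.val - 1 < n by omega)
        (show x.val = (x.val - 1) + 1 by omega)
      exact ⟨hres.1, by rw [hres.2, hLb]⟩
    · have hres := feas_add_lp n k hk hFb (show x.val - 1 < n by omega)
        (show x.val - 1 < k by omega) (show x.val = (x.val - 1) + 1 by omega)
        (show y.val = n + (x.val - 1) + 1 by omega) (Or.inr rfl)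
      exact ⟨hres.1, by rw [hres.2, hLb]⟩
    · rw [addv_comm]
      have hres := feas_add_lp n k hk hFb (show y.val - 1 < n by omega)
        (show y.val - 1 < k by omega) (show y.val = (y.val - 1) + 1 by omega)
        (show x.val = n + (y.val - 1) + 1 by omega) (Or.inr rfl)
      exact ⟨hres.1, by rw [hres.2, hLb]⟩

end SP13
namespace SP13

def dSet (n k : ℕ) (c : Fin (n + k + 1) → ℕ) : Set ℕ :=
  {q | ∃ a, bdd c a ∧ memPow (starPend n k) q a}

lemma dSet_bddAbove (n k : ℕ) (hk : k ≤ n) (c : Fin (n + k + 1) → ℕ) :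
    BddAbove (dSet n k c) := by
  refine ⟨∑ j, c j, fun q hq => ?_⟩
  obtain ⟨a, hba, hm⟩ := hq
  obtain ⟨b, hb, hFb, hLb⟩ := memPow_struct n k hk q a hm
  have hsum := sum_univ_eq n k b
  have h2 := hFb.2
  have h3 : (∑ j, b j) ≤ ∑ j, c j :=
    Finset.sum_le_sum (fun j _ => le_trans (hb j) (hba j))
  omega

lemma dSet_nonempty (n k : ℕ) (c : Fin (n + k + 1) → ℕ) : (dSet n k c).Nonempty :=
  ⟨0, fun _ => 0, fun i => Nat.zero_le _, memPow_zero _ _⟩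

lemma delta_mem (n k : ℕ) (hk : k ≤ n) (c : Fin (n + k + 1) → ℕ) :
    deltaC (starPend n k) c ∈ dSet n k c :=
  Nat.sSup_mem (dSet_nonempty n k c) (dSet_bddAbove n k hk c)

lemma le_delta (n k : ℕ) (hk : k ≤ n) {c : Fin (n + k + 1) → ℕ} {q : ℕ}
    (hq : q ∈ dSet n k c) : q ≤ deltaC (starPend n k) c :=
  le_csSup (dSet_bddAbove n k hk c) hq

lemma feas_le_delta (n k : ℕ) (hk : k ≤ n) {c a : Fin (n + k + 1) → ℕ}
    (hb : bdd c a) (hF : Feas n k a) : Ls n k a ≤ deltaC (starPend n k) c :=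
  le_delta n k hk ⟨a, hb, feas_memPow n k hk _ a hF rfl⟩

lemma genW_iff (n k : ℕ) (hk : k ≤ n) (c u : Fin (n + k + 1) → ℕ) :
    u ∈ genW (starPend n k) c ↔
      bdd c u ∧ Feas n k u ∧ Ls n k u = deltaC (starPend n k) c := by
  constructor
  · rintro ⟨hb, hm, hmin⟩
    obtain ⟨b, hbu, hFb, hLb⟩ := memPow_struct n k hk _ u hm
    have hmb : memPow (starPend n k) (deltaC (starPend n k) c) b :=
      feas_memPow n k hk _ b hFb hLb
    have heq : b = u := hmin b hbu hmb
    exact ⟨hb, heq ▸ hFb, heq ▸ hLb⟩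
  · rintro ⟨hb, hF, hL⟩
    refine ⟨hb, feas_memPow n k hk _ u hF hL, ?_⟩
    intro b hub hmb
    obtain ⟨b', hb'b, hFb', hLb'⟩ := memPow_struct n k hk _ b hmb
    have hsum' := sum_univ_eq n k b'
    have h2' := hFb'.2
    have hsumu := sum_univ_eq n k u
    have h2u := hF.2
    have hle : ∀ j, b' j ≤ u j := fun j => le_trans (hb'b j) (hub j)
    have hsle : (∑ j, u j) ≤ ∑ j, b' j := by omega
    have heq : b' = u := eq_of_le_of_sum_le hle hsle
    funext j
    have e1 := hb'b j
    have e2 := hub j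
    have e3 := congrFun heq j
    omega

end SP13
namespace SP13

lemma no_mixed (n k : ℕ) (hk : k ≤ n) {c u v : Fin (n + k + 1) → ℕ}
    (hub : bdd c u) (huF : Feas n k u) (huL : Ls n k u = deltaC (starPend n k) c)
    (hvb : bdd c v) (hvF : Feas n k v) (hvL : Ls n k v = deltaC (starPend n k) c)
    {s : Fin (n + k + 1)} (hs : s.val = 0 ∨ n < s.val)
    {l : ℕ} (hl : l < n) (h1 : v s < u s)
    (h2 : u (idx n k (l + 1)) < v (idx n k (l + 1))) : False := by
  have hxyne : idx n k 0 ≠ idx n k (l + 1) := idx_ne (by omega) (by omega) (by omega)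
  rcases hs with hs0 | hsp
  · -- s is the center
    have hsi : idx n k 0 = s := ((eq_idx (by omega)).mpr hs0).symm
    have h1' : v (idx n k 0) < u (idx n k 0) := by rw [hsi]; exact h1
    by_cases h0 : u (idx n k 0) + 1 ≤ c (idx n k 0)
    · have hres := feas_add_cl n k huF (idx_val (n := n) (k := k) (by omega)) hl
        (idx_val (by omega))
      have hbdd : bdd c (addv (idx n k 0) (idx n k (l + 1)) u) := by
        intro jj
        by_cases hjx : idx n k 0 = jj
        · rw [← hjx, addv_fst (Ne.symm hxyne) u]; exact h0
        · by_cases hjy : idx n k (l + 1) = jj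
          · rw [← hjy, addv_snd hxyne u]
            have := hvb (idx n k (l + 1)); omega
          · rw [addv_ne hjx hjy u]; exact hub jj
      have hcontra := feas_le_delta n k hk hbdd hres.1
      rw [hres.2, huL] at hcontra; omega
    · have hsums : (∑ i ∈ range n, v (idx n k (i + 1)))
          ≤ ∑ i ∈ range n, u (idx n k (i + 1)) := by
        have e1 := hvL; have e2 := huL; simp only [Ls] at e1 e2; omega
      obtain ⟨σ, hσn, hσ⟩ := exists_lt_of_sum_le hsums hl h2
      have hxyne' : idx n k 0 ≠ idx n k (σ + 1) := idx_ne (by omega) (by omega) (by omega)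
      have hres := feas_add_cl n k hvF (idx_val (n := n) (k := k) (by omega)) hσn
        (idx_val (by omega))
      have hbdd : bdd c (addv (idx n k 0) (idx n k (σ + 1)) v) := by
        intro jj
        by_cases hjx : idx n k 0 = jj
        · rw [← hjx, addv_fst (Ne.symm hxyne') v]
          have := hub (idx n k 0); omega
        · by_cases hjy : idx n k (σ + 1) = jj
          · rw [← hjy, addv_snd hxyne' v]
            have := hub (idx n k (σ + 1)); omega
          · rw [addv_ne hjx hjy v]; exact hvb jj
      have hcontra := feas_le_delta n k hk hbdd hres.1
      rw [hres.2, hvL] at hcontra; omega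
  · -- s is a pendant vertex
    have hik : s.val - n - 1 < k := by have := s.isLt; omega
    have hsi : idx n k (n + (s.val - n - 1) + 1) = s :=
      ((eq_idx (by omega)).mpr (by omega)).symm
    by_cases h0 : u (idx n k 0) + 1 ≤ c (idx n k 0)
    · have hres := feas_add_cl n k huF (idx_val (n := n) (k := k) (by omega)) hl
        (idx_val (by omega))
      have hbdd : bdd c (addv (idx n k 0) (idx n k (l + 1)) u) := by
        intro jj
        by_cases hjx : idx n k 0 = jj
        · rw [← hjx, addv_fst (Ne.symm hxyne) u]; exact h0
        · by_cases hjy : idx n k (l + 1) = jj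
          · rw [← hjy, addv_snd hxyne u]
            have := hvb (idx n k (l + 1)); omega
          · rw [addv_ne hjx hjy u]; exact hub jj
      have hcontra := feas_le_delta n k hk hbdd hres.1
      rw [hres.2, huL] at hcontra; omega
    · have hsums : (∑ i ∈ range k, u (idx n k (n + i + 1)))
          ≤ ∑ i ∈ range k, v (idx n k (n + i + 1)) := by
        have b1 := huF.2; have b2 := hvF.2
        rw [huL] at b1; rw [hvL] at b2
        have e1 := hub (idx n k 0); have e2 := hvb (idx n k 0)
        simp only [Ps] at b1 b2; omega
      obtain ⟨j, hjk, hj⟩ := exists_lt_of_sum_le hsums hik (by rw [hsi]; exact h1)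
      by_cases hcase : u (idx n k (j + 1)) < v (idx n k (j + 1))
      · have hres := feas_add_lp n k hk huF (show j < n by omega) hjk
          (idx_val (by omega)) (idx_val (by omega)) (Or.inr rfl)
        have hne2 : idx n k (j + 1) ≠ idx n k (n + j + 1) :=
          idx_ne (by omega) (by omega) (by omega)
        have hbdd : bdd c (addv (idx n k (j + 1)) (idx n k (n + j + 1)) u) := by
          intro jj
          by_cases hjx : idx n k (j + 1) = jj
          · rw [← hjx, addv_fst (Ne.symm hne2) u]
            have := hvb (idx n k (j + 1)); omega
          · by_cases hjy : idx n k (n + j + 1) = jj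
            · rw [← hjy, addv_snd hne2 u]
              have := hvb (idx n k (n + j + 1)); omega
            · rw [addv_ne hjx hjy u]; exact hub jj
        have hcontra := feas_le_delta n k hk hbdd hres.1
        rw [hres.2, huL] at hcontra; omega
      · have hcond : u (idx n k (n + j + 1)) < u (idx n k (j + 1)) := by
          have := hvF.1 j hjk; omega
        have hres := feas_add_lp n k hk huF hl hjk
          (idx_val (by omega)) (idx_val (by omega)) (Or.inl hcond)
        have hne2 : idx n k (l + 1) ≠ idx n k (n + j + 1) :=
          idx_ne (by omega) (by omega) (by omega)
        have hbdd : bdd c (addv (idx n k (l + 1)) (idx n k (n + j + 1)) u) := by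
          intro jj
          by_cases hjx : idx n k (l + 1) = jj
          · rw [← hjx, addv_fst (Ne.symm hne2) u]
            have := hvb (idx n k (l + 1)); omega
          · by_cases hjy : idx n k (n + j + 1) = jj
            · rw [← hjy, addv_snd hne2 u]
              have := hvb (idx n k (n + j + 1)); omega
            · rw [addv_ne hjx hjy u]; exact hub jj
        have hcontra := feas_le_delta n k hk hbdd hres.1
        rw [hres.2, huL] at hcontra; omega

end SP13

open SP13


/-- A graph obtained from a star graph by attaching at most one pendant
edge to each of its leaves enjoys the strong exchange property. -/
theorem stmt13 (n k : ℕ) (hn : 1 ≤ n) (hk : k ≤ n) :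
    SEP (starPend n k) := by
  intro c hc u hu v hv ξ ρ h1 h2
  rw [genW_iff n k hk] at hu hv ⊢
  obtain ⟨hub, huF, huL⟩ := hu
  obtain ⟨hvb, hvF, hvL⟩ := hv
  have hξρ : ξ ≠ ρ := by intro h; rw [h] at h1; omega
  have hξρv : ξ.val ≠ ρ.val := fun h => hξρ (Fin.ext h)
  have hξlt := ξ.isLt
  have hρlt := ρ.isLt
  have hwb : bdd c (exch u ξ ρ) := by
    intro jj
    by_cases hjρ : jj = ρ
    · rw [hjρ, exch_rho]; have := hvb ρ; omega
    · by_cases hjξ : jj = ξ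
      · rw [hjξ, exch_xi u hξρ]; have := hub ξ; omega
      · rw [exch_other u hjρ hjξ]; exact hub jj
  by_cases hξS : ξ.val = 0 ∨ n < ξ.val
  · by_cases hρS : ρ.val = 0 ∨ n < ρ.val
    · -- both in the "center/pendant" class
      have hLw : Ls n k (exch u ξ ρ) = Ls n k u := by
        simp only [Ls]
        refine sum_congr_at (fun i hi => ?_)
        refine exch_other u ?_ ?_ <;>
          (rw [Ne, Fin.ext_iff, idx_val (by omega)]; omega)
      have hpend : ∀ i, i < k →
          exch u ξ ρ (idx n k (n + i + 1)) ≤ exch u ξ ρ (idx n k (i + 1)) := by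
        intro i hikk
        have hleaf : exch u ξ ρ (idx n k (i + 1)) = u (idx n k (i + 1)) := by
          refine exch_other u ?_ ?_ <;>
            (rw [Ne, Fin.ext_iff, idx_val (by omega)]; omega)
        rw [hleaf]
        by_cases hpξ : idx n k (n + i + 1) = ξ
        · rw [hpξ, exch_xi u hξρ]
          have := huF.1 i hikk
          rw [hpξ] at this
          omega
        · by_cases hpρ : idx n k (n + i + 1) = ρ
          · rw [hpρ, exch_rho]
            by_contra hcon
            have hfu := huF.1 i hikk
            rw [hpρ] at hfu
            have hequ : u ρ = u (idx n k (i + 1)) := by omega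
            have hfv := hvF.1 i hikk
            rw [hpρ] at hfv
            have hlt : u (idx n k (i + 1)) < v (idx n k (i + 1)) := by omega
            exact no_mixed n k hk hub huF huL hvb hvF hvL hξS
              (show i < n by omega) h1 hlt
          · rw [exch_other u hpρ hpξ]
            exact huF.1 i hikk
      have hbal : exch u ξ ρ (idx n k 0) + Ps n k (exch u ξ ρ) = Ls n k (exch u ξ ρ) := by
        rcases hξS with hξ0 | hξp
        · rcases hρS with hρ0 | hρp
          · exact absurd (Fin.ext (hξ0.trans hρ0.symm)) hξρ
          · -- ξ center, ρ pendant
            have hξi : idx n k 0 = ξ := ((eq_idx (by omega)).mpr hξ0).symm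
            have hρi : idx n k (n + (ρ.val - n - 1) + 1) = ρ :=
              ((eq_idx (by omega)).mpr (by omega)).symm
            have h0w : exch u ξ ρ (idx n k 0) = u ξ - 1 := by
              rw [hξi, exch_xi u hξρ]
            have hPw : Ps n k (exch u ξ ρ) = Ps n k u + 1 := by
              simp only [Ps]
              refine sum_succ_at (show ρ.val - n - 1 < k by omega)
                (fun i hi hne => ?_) ?_
              · refine exch_other u ?_ ?_ <;>
                  (rw [Ne, Fin.ext_iff, idx_val (by omega)]; omega)
              · rw [hρi, exch_rho]
            rw [h0w, hPw, hLw]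
            have := huF.2
            rw [hξi] at this
            omega
        · rcases hρS with hρ0 | hρp
          · -- ξ pendant, ρ center
            have hρi : idx n k 0 = ρ := ((eq_idx (by omega)).mpr hρ0).symm
            have hξi : idx n k (n + (ξ.val - n - 1) + 1) = ξ :=
              ((eq_idx (by omega)).mpr (by omega)).symm
            have h0w : exch u ξ ρ (idx n k 0) = u ρ + 1 := by
              rw [hρi, exch_rho]
            have hPw : Ps n k (exch u ξ ρ) + 1 = Ps n k u := by
              simp only [Ps]
              refine sum_pred_at (show ξ.val - n - 1 < k by omega)
                (fun i hi hne => ?_) ?_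
              · refine exch_other u ?_ ?_ <;>
                  (rw [Ne, Fin.ext_iff, idx_val (by omega)]; omega)
              · rw [hξi, exch_xi u hξρ]; omega
            rw [h0w, hLw]
            have := huF.2
            rw [hρi] at this
            omega
          · -- both pendant
            have h0w : exch u ξ ρ (idx n k 0) = u (idx n k 0) := by
              refine exch_other u ?_ ?_ <;>
                (rw [Ne, Fin.ext_iff, idx_val (by omega)]; omega)
            have hξi : idx n k (n + (ξ.val - n - 1) + 1) = ξ :=
              ((eq_idx (by omega)).mpr (by omega)).symm
            have hρi : idx n k (n + (ρ.val - n - 1) + 1) = ρ :=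
              ((eq_idx (by omega)).mpr (by omega)).symm
            have hPw : Ps n k (exch u ξ ρ) = Ps n k u := by
              simp only [Ps]
              refine sum_exch_at (show ρ.val - n - 1 < k by omega)
                (show ξ.val - n - 1 < k by omega) (by omega)
                (fun i hi hit his => ?_) ?_ ?_
              · refine exch_other u ?_ ?_ <;>
                  (rw [Ne, Fin.ext_iff, idx_val (by omega)]; omega)
              · rw [hρi, exch_rho]
              · rw [hξi, exch_xi u hξρ]; omega
            rw [h0w, hPw, hLw]
            exact huF.2
      exact ⟨hwb, ⟨hpend, hbal⟩, by rw [hLw, huL]⟩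
    · -- ξ in S, ρ a leaf : impossible
      have hρi : idx n k (ρ.val - 1 + 1) = ρ := ((eq_idx (by omega)).mpr (by omega)).symm
      exact absurd (no_mixed n k hk hub huF huL hvb hvF hvL hξS
        (show ρ.val - 1 < n by omega) h1 (by rw [hρi]; exact h2)) (fun h => h)
  · by_cases hρS : ρ.val = 0 ∨ n < ρ.val
    · -- ξ a leaf, ρ in S : impossible
      have hξi : idx n k (ξ.val - 1 + 1) = ξ := ((eq_idx (by omega)).mpr (by omega)).symm
      exact absurd (no_mixed n k hk hvb hvF hvL hub huF huL hρS
        (show ξ.val - 1 < n by omega) h2 (by rw [hξi]; exact h1)) (fun h => h)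
    · -- both leaves
      push_neg at hξS hρS
      have hξi : idx n k (ξ.val - 1 + 1) = ξ := ((eq_idx (by omega)).mpr (by omega)).symm
      have hρi : idx n k (ρ.val - 1 + 1) = ρ := ((eq_idx (by omega)).mpr (by omega)).symm
      have hLw : Ls n k (exch u ξ ρ) = Ls n k u := by
        simp only [Ls]
        refine sum_exch_at (show ρ.val - 1 < n by omega)
          (show ξ.val - 1 < n by omega) (by omega)
          (fun i hi hit his => ?_) ?_ ?_
        · refine exch_other u ?_ ?_ <;>
            (rw [Ne, Fin.ext_iff, idx_val (by omega)]; omega)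
        · rw [hρi, exch_rho]
        · rw [hξi, exch_xi u hξρ]; omega
      have hPw : Ps n k (exch u ξ ρ) = Ps n k u := by
        simp only [Ps]
        refine sum_congr_at (fun i hi => ?_)
        refine exch_other u ?_ ?_ <;>
          (rw [Ne, Fin.ext_iff, idx_val (by omega)]; omega)
      have h0w : exch u ξ ρ (idx n k 0) = u (idx n k 0) := by
        refine exch_other u ?_ ?_ <;>
          (rw [Ne, Fin.ext_iff, idx_val (by omega)]; omega)
      have hpend : ∀ i, i < k →
          exch u ξ ρ (idx n k (n + i + 1)) ≤ exch u ξ ρ (idx n k (i + 1)) := by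
        intro i hikk
        have hpw : exch u ξ ρ (idx n k (n + i + 1)) = u (idx n k (n + i + 1)) := by
          refine exch_other u ?_ ?_ <;>
            (rw [Ne, Fin.ext_iff, idx_val (by omega)]; omega)
        rw [hpw]
        by_cases hlξ : idx n k (i + 1) = ξ
        · rw [hlξ, exch_xi u hξρ]
          by_contra hcon
          have hfu := huF.1 i hikk
          rw [hlξ] at hfu
          have hequ : u (idx n k (n + i + 1)) = u ξ := by omega
          have hfv := hvF.1 i hikk
          rw [hlξ] at hfv
          have hlt : v (idx n k (n + i + 1)) < u (idx n k (n + i + 1)) := by omega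
          exact no_mixed n k hk hub huF huL hvb hvF hvL
            (show (idx n k (n + i + 1)).val = 0 ∨ n < (idx n k (n + i + 1)).val by
              rw [idx_val (by omega)]; omega)
            (show ρ.val - 1 < n by omega) hlt (by rw [hρi]; exact h2)
        · by_cases hlρ : idx n k (i + 1) = ρ
          · rw [hlρ, exch_rho]
            have := huF.1 i hikk
            rw [hlρ] at this
            omega
          · rw [exch_other u hlρ hlξ]
            exact huF.1 i hikk
      refine ⟨hwb, ⟨hpend, ?_⟩, by rw [hLw, huL]⟩
      rw [h0w, hPw, hLw]
      exact huF.2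
end

section
/- Let $G$ be the graph on vertices $x_1,\ldots,x_7$ obtained from $C_4$ on $x_1,x_2,x_3,x_4$ by adding the edges $\{x_1,x_5\},\{x_5,x_6\},\{x_5,x_7\}$, and let $\mathfrak{c} = (1,2,1,1,1,1,1)$. Then $\delta_{\mathfrak{c}}(I(G)) = 3$, the monomials $w_1 = (x_1x_2)(x_2x_3)(x_5x_6)$ and $w_2 = (x_1x_2)(x_3x_4)(x_5x_7)$ belong to $\mathcal{W}(\mathfrak{c},G)$, $\deg_{x_2}(w_1) > \deg_{x_2}(w_2)$ and $\deg_{x_7}(w_1) < \deg_{x_7}(w_2)$, but $x_7 w_1/x_2 \notin \mathcal{W}(\mathfrak{c},G)$. Hence $G$ does not enjoy the strong exchange property. -/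
open Finset

/-- The cycle `C₄` on `0,1,2,3` with the extra edges `{0,4},{4,5},{4,6}`. -/
def G18 : SimpleGraph (Fin 7) := listGraph 7 [(0,1),(1,2),(2,3),(0,3),(0,4),(4,5),(4,6)]


instance decAdjG18 : DecidableRel G18.Adj := fun a b =>
  decidable_of_iff _ (SimpleGraph.fromRel_adj _ a b).symm

lemma memPow_le_sum {n : ℕ} (G : SimpleGraph (Fin n)) (S : Finset (Fin n))
    (hS : ∀ a b, G.Adj a b → a ∈ S ∨ b ∈ S) {q : ℕ} {u : Fin n → ℕ}
    (h : memPow G q u) : q ≤ ∑ j ∈ S, u j := by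
  obtain ⟨e, hadj, hle⟩ := h
  have key : ∀ i : Fin q, 1 ≤ ∑ j ∈ S,
      ((if (e i).1 = j then 1 else 0) + (if (e i).2 = j then 1 else 0)) := by
    intro i
    rcases hS _ _ (hadj i) with h1 | h1
    · calc (1:ℕ) ≤ (if (e i).1 = (e i).1 then 1 else 0) + (if (e i).2 = (e i).1 then 1 else 0) := by simp
        _ ≤ _ := Finset.single_le_sum (f := fun j => (if (e i).1 = j then 1 else 0) + (if (e i).2 = j then 1 else 0)) (fun j _ => Nat.zero_le _) h1
    · calc (1:ℕ) ≤ (if (e i).1 = (e i).2 then 1 else 0) + (if (e i).2 = (e i).2 then 1 else 0) := by simp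
        _ ≤ _ := Finset.single_le_sum (f := fun j => (if (e i).1 = j then 1 else 0) + (if (e i).2 = j then 1 else 0)) (fun j _ => Nat.zero_le _) h1
  calc q = ∑ _i : Fin q, 1 := by simp
    _ ≤ ∑ i : Fin q, ∑ j ∈ S, ((if (e i).1 = j then 1 else 0) + (if (e i).2 = j then 1 else 0)) :=
        Finset.sum_le_sum fun i _ => key i
    _ = ∑ j ∈ S, ∑ i : Fin q, ((if (e i).1 = j then 1 else 0) + (if (e i).2 = j then 1 else 0)) :=
        Finset.sum_comm
    _ ≤ ∑ j ∈ S, u j := Finset.sum_le_sum fun j _ => hle j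

lemma two_mul_le_sum {n : ℕ} {G : SimpleGraph (Fin n)} {q : ℕ} {u : Fin n → ℕ}
    (h : memPow G q u) : 2 * q ≤ ∑ j, u j := by
  obtain ⟨e, _, hle⟩ := h
  calc 2 * q = ∑ i : Fin q, ∑ j : Fin n,
        ((if (e i).1 = j then 1 else 0) + (if (e i).2 = j then 1 else 0)) := by
        simp [Finset.sum_add_distrib, Finset.sum_ite_eq, mul_comm]
    _ = ∑ j : Fin n, ∑ i : Fin q, ((if (e i).1 = j then 1 else 0) + (if (e i).2 = j then 1 else 0)) :=
        Finset.sum_comm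
    _ ≤ ∑ j, u j := Finset.sum_le_sum fun j _ => hle j

lemma eq_of_bdd_sum {n : ℕ} {u b : Fin n → ℕ} (h : bdd u b) (hs : ∑ j, u j ≤ ∑ j, b j) : b = u := by
  funext j
  exact (Finset.sum_eq_sum_iff_of_le (fun i _ => h i)).mp
    (le_antisymm (Finset.sum_le_sum fun i _ => h i) hs) j (Finset.mem_univ j)

/-- With `c = (1,2,1,1,1,1,1)`: `δ_c(I(G)) = 3`,
`w₁ = (x₁x₂)(x₂x₃)(x₅x₆)` and `w₂ = (x₁x₂)(x₃x₄)(x₅x₇)` lie in `W(c,G)`,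
`deg_{x₂} w₁ > deg_{x₂} w₂`, `deg_{x₇} w₁ < deg_{x₇} w₂`, but `x₇ w₁ / x₂ ∉ W(c,G)`;
hence `G` does not enjoy the strong exchange property. -/
theorem stmt18 :
    IsGreatest {q | ∃ a, bdd (![1,2,1,1,1,1,1] : Fin 7 → ℕ) a ∧ memPow G18 q a} 3 ∧
    (![1,2,1,0,1,1,0] : Fin 7 → ℕ) ∈ genW G18 ![1,2,1,1,1,1,1] ∧
    (![1,1,1,1,1,0,1] : Fin 7 → ℕ) ∈ genW G18 ![1,2,1,1,1,1,1] ∧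
    (![1,1,1,1,1,0,1] : Fin 7 → ℕ) 1 < (![1,2,1,0,1,1,0] : Fin 7 → ℕ) 1 ∧
    (![1,2,1,0,1,1,0] : Fin 7 → ℕ) 6 < (![1,1,1,1,1,0,1] : Fin 7 → ℕ) 6 ∧
    exch (![1,2,1,0,1,1,0] : Fin 7 → ℕ) 1 6 ∉ genW G18 ![1,2,1,1,1,1,1] ∧
    ¬ SEP G18 := by
  have hS024 : ∀ a b : Fin 7, G18.Adj a b →
      a ∈ ({0,2,4} : Finset (Fin 7)) ∨ b ∈ ({0,2,4} : Finset (Fin 7)) := by decide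
  have hS134 : ∀ a b : Fin 7, G18.Adj a b →
      a ∈ ({1,3,4} : Finset (Fin 7)) ∨ b ∈ ({1,3,4} : Finset (Fin 7)) := by decide
  have hub : ∀ q ∈ {q | ∃ a, bdd (![1,2,1,1,1,1,1] : Fin 7 → ℕ) a ∧ memPow G18 q a}, q ≤ 3 := by
    rintro q ⟨a, hb, hm⟩
    have h1 := memPow_le_sum G18 {0,2,4} hS024 hm
    have h2 : ∑ j ∈ ({0,2,4} : Finset (Fin 7)), a j ≤
        ∑ j ∈ ({0,2,4} : Finset (Fin 7)), (![1,2,1,1,1,1,1] : Fin 7 → ℕ) j :=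
      Finset.sum_le_sum fun j _ => hb j
    have h3 : ∑ j ∈ ({0,2,4} : Finset (Fin 7)), (![1,2,1,1,1,1,1] : Fin 7 → ℕ) j = 3 := by decide
    omega
  have hmem1 : memPow G18 3 ![1,2,1,0,1,1,0] := ⟨![(0,1),(1,2),(4,5)], by decide, by decide⟩
  have hmem2 : memPow G18 3 ![1,1,1,1,1,0,1] := ⟨![(0,1),(2,3),(4,6)], by decide, by decide⟩
  have hG : IsGreatest {q | ∃ a, bdd (![1,2,1,1,1,1,1] : Fin 7 → ℕ) a ∧ memPow G18 q a} 3 :=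
    ⟨⟨![1,2,1,0,1,1,0], fun i => by fin_cases i <;> decide, hmem1⟩, hub⟩
  have hδ : deltaC G18 ![1,2,1,1,1,1,1] = 3 := hG.csSup_eq
  have hmin : ∀ (w : Fin 7 → ℕ), (∑ j, w j) = 6 → ∀ b, bdd w b →
      memPow G18 (deltaC G18 ![1,2,1,1,1,1,1]) b → b = w := by
    intro w hw b hb hm
    rw [hδ] at hm
    have := two_mul_le_sum hm
    exact eq_of_bdd_sum hb (by omega)
  have hw1 : (![1,2,1,0,1,1,0] : Fin 7 → ℕ) ∈ genW G18 ![1,2,1,1,1,1,1] :=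
    ⟨fun i => by fin_cases i <;> decide, by rw [hδ]; exact hmem1, hmin _ (by decide)⟩
  have hw2 : (![1,1,1,1,1,0,1] : Fin 7 → ℕ) ∈ genW G18 ![1,2,1,1,1,1,1] :=
    ⟨fun i => by fin_cases i <;> decide, by rw [hδ]; exact hmem2, hmin _ (by decide)⟩
  have hnot : exch (![1,2,1,0,1,1,0] : Fin 7 → ℕ) 1 6 ∉ genW G18 ![1,2,1,1,1,1,1] := by
    rintro ⟨-, hm, -⟩
    rw [hδ] at hm
    have h1 := memPow_le_sum G18 {1,3,4} hS134 hm
    have h3 : ∑ j ∈ ({1,3,4} : Finset (Fin 7)), exch (![1,2,1,0,1,1,0] : Fin 7 → ℕ) 1 6 j = 2 := by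
      decide
    omega
  refine ⟨hG, hw1, hw2, by decide, by decide, hnot, ?_⟩
  intro h
  exact hnot (h ![1,2,1,1,1,1,1] (by decide) _ hw1 _ hw2 1 6 (by decide) (by decide))
end
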